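/- arXiv:2410.12039 — 6 statements merged into one kernel-verified Lean document; each statement's English description precedes it below -/
import Mathlib

section
/- In the two-vertex multigraph G consisting of vertices a and b, one heavy edge of weight α between a and b, q light self-loops of weight β at a, and q light self-loops of weight β at b, with α > qβ ≥ 0 and symmetric additive utilities (an agent values an edge at its weight if incident, else 0), no orientation of G (i.e., no allocation in which every edge is assigned to one of its endvertices) is EFX: in every orientation some agent strongly envies the other. -/
/-! Whoever receives the heavy edge, the other agent owns only its own `q` loops, worth `qβ`,
while the owner's bundle minus one of the owner's loops is still worth `α > qβ` to it. -/

/-- Bundle of an agent under a (total) orientation/allocation. -/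
def bundleT {V E : Type*} [Fintype E] [DecidableEq V] [DecidableEq E]
    (π : E → V) (i : V) : Finset E :=
  Finset.univ.filter (fun e => π e = i)

/-- Additive utility: an agent values an edge at its weight iff incident. -/
def util {V E : Type*} [DecidableEq V] (ends : E → V × V) (w : E → ℝ)
    (i : V) (S : Finset E) : ℝ :=
  ∑ e ∈ S, if (ends e).1 = i ∨ (ends e).2 = i then w e else 0

/-- Agent `i` strongly envies agent `j`. -/
def strongEnvyT {V E : Type*} [Fintype E] [DecidableEq V] [DecidableEq E]
    (ends : E → V × V) (w : E → ℝ) (π : E → V) (i j : V) : Prop :=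
  ∃ e ∈ bundleT π j, util ends w i (bundleT π i) < util ends w i (bundleT π j \ {e})

/-- Edges of the two-vertex instance: one heavy edge plus `q` light loops at
each of the two vertices. -/
abbrev E0 (q : ℕ) := Unit ⊕ (Bool × Fin q)

def ends0 {q : ℕ} : E0 q → Bool × Bool
  | Sum.inl _ => (false, true)
  | Sum.inr (v, _) => (v, v)

def w0 {q : ℕ} (α β : ℝ) : E0 q → ℝ
  | Sum.inl _ => α
  | Sum.inr _ => β

lemma util_sdiff_singleton_of_not_incident {V E : Type*} [DecidableEq V] [DecidableEq E]
    (ends : E → V × V) (w : E → ℝ) (i : V) (S : Finset E) {e : E}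
    (hi : ¬((ends e).1 = i ∨ (ends e).2 = i)) :
    util ends w i (S \ {e}) = util ends w i S := by
  rw [util, Finset.sdiff_singleton_eq_erase]
  exact Finset.sum_erase S (f := fun e => if (ends e).1 = i ∨ (ends e).2 = i then w e else 0)
    (if_neg hi)

lemma strongEnvyT_of_not_incident {V E : Type*} [Fintype E] [DecidableEq V] [DecidableEq E]
    (ends : E → V × V) (w : E → ℝ) (π : E → V) {i j : V} {e : E}
    (he : e ∈ bundleT π j) (hi : ¬((ends e).1 = i ∨ (ends e).2 = i))
    (henvy : util ends w i (bundleT π i) < util ends w i (bundleT π j)) :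
    strongEnvyT ends w π i j :=
  ⟨e, he, by rwa [util_sdiff_singleton_of_not_incident ends w i _ hi]⟩

lemma mem_bundleT {V E : Type*} [Fintype E] [DecidableEq V] [DecidableEq E]
    {π : E → V} {i : V} {e : E} : e ∈ bundleT π i ↔ π e = i := by
  simp [bundleT]

lemma util_ends0_bundleT {q : ℕ} (α β : ℝ) (π : E0 q → Bool)
    (hloops : ∀ v k, π (Sum.inr (v, k)) = v) (i j : Bool) :
    util ends0 (w0 α β) i (bundleT π j) =
      (if π (Sum.inl ()) = j then α else 0) + (if i = j then q * β else 0) := by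
  simp only [util, bundleT, Finset.sum_filter, Fintype.sum_sum_type, Fintype.sum_prod_type,
    hloops, ends0, w0]
  cases i <;> cases j <;> simp

theorem stmt0_general (q : ℕ) (hq : 1 ≤ q) (α β : ℝ) (hαβ : (q : ℝ) * β < α)
    (π : E0 q → Bool)
    (hloops : ∀ v k, π (Sum.inr (v, k)) = v) :
    ∃ i j : Bool, i ≠ j ∧ strongEnvyT ends0 (w0 α β) π i j := by
  set v := π (Sum.inl ()) with hv
  refine ⟨!v, v, Bool.not_ne_self v, ?_⟩
  refine strongEnvyT_of_not_incident ends0 (w0 α β) π (e := Sum.inr (v, ⟨0, hq⟩))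
    (mem_bundleT.2 (hloops _ _)) (by simp [ends0]) ?_
  simpa [util_ends0_bundleT α β π hloops, ← hv] using hαβ

/-- the two-vertex multigraph with one heavy edge of weight `α`
between the vertices and `q` light self-loops of weight `β` at each vertex,
with `α > qβ ≥ 0`, admits no EFX orientation: in every orientation some agent
strongly envies the other. -/
theorem stmt0 (q : ℕ) (hq : 1 ≤ q) (α β : ℝ) (hβ : 0 ≤ β) (hαβ : (q : ℝ) * β < α)
    (π : E0 q → Bool)
    (horient : ∀ e, π e = (ends0 e).1 ∨ π e = (ends0 e).2)
    (hloops : ∀ v k, π (Sum.inr (v, k)) = v) :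
    ∃ i j : Bool, i ≠ j ∧ strongEnvyT ends0 (w0 α β) π i j :=
  stmt0_general q hq α β hαβ π hloops
end

section
/- For two agents with additive utility functions over a finite set of goods, there exists an EFX allocation of all goods to the two agents in which agent i does not envy agent j (i.e., u_i of i's bundle is at least u_i of j's bundle), and in which neither agent strongly envies the other. -/
/-!
Cut and choose. Agent `j` cuts the goods into two bundles `A`, `Aᶜ` such that `A` is the one
`j` prefers and `j` would not strongly envy `A` when holding `Aᶜ`; such a cut exists because a
heavier side of minimal weight (and, among those, of minimal size) cannot lose a good and stay
heavier than the other side. Agent `i` then takes the bundle it prefers. Neither agent envies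
the other, except possibly `j` when `i` picks `A`, and that envy is not strong by the choice of
the cut.
-/

open Finset

section

variable {E : Type*} [DecidableEq E] {w : E → ℝ}

def StronglyEnvies (w : E → ℝ) (X Y : Finset E) : Prop :=
  ∃ e ∈ Y, ∑ f ∈ X, w f < ∑ f ∈ Y \ {e}, w f

theorem not_stronglyEnvies_of_le (hw : ∀ e, 0 ≤ w e) {X Y : Finset E}
    (h : ∑ e ∈ Y, w e ≤ ∑ e ∈ X, w e) : ¬ StronglyEnvies w X Y := by
  rintro ⟨e, -, hlt⟩
  have : ∑ f ∈ Y \ {e}, w f ≤ ∑ f ∈ Y, w f :=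
    sum_le_sum_of_subset_of_nonneg sdiff_subset fun f _ _ => hw f
  linarith

variable [Fintype E]

def IsEFXCut (w : E → ℝ) (A : Finset E) : Prop :=
  ∑ e ∈ Aᶜ, w e ≤ ∑ e ∈ A, w e ∧ ¬ StronglyEnvies w Aᶜ A

theorem exists_isEFXCut (hw : ∀ e, 0 ≤ w e) : ∃ A, IsEFXCut w A := by
  let S := univ.filter fun A : Finset E => ∑ e ∈ Aᶜ, w e ≤ ∑ e ∈ A, w e
  have hS : S.Nonempty := ⟨univ, by simpa [S] using sum_nonneg fun e _ => hw e⟩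
  obtain ⟨A, hAS, hmin⟩ := S.exists_min_image (fun A => toLex (∑ e ∈ A, w e, #A)) hS
  refine ⟨A, (mem_filter.1 hAS).2, ?_⟩
  rintro ⟨e, he, hlt⟩
  rw [sdiff_singleton_eq_erase] at hlt
  have hB : ∑ f ∈ A.erase e, w f = ∑ f ∈ A, w f - w e := sum_erase_eq_sub he
  have hBc : ∑ f ∈ (A.erase e)ᶜ, w f = w e + ∑ f ∈ Aᶜ, w f := by
    rw [compl_erase, sum_insert (by simpa using he)]
  by_cases hBS : ∑ f ∈ (A.erase e)ᶜ, w f ≤ ∑ f ∈ A.erase e, w f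
  · have hlex : toLex (∑ f ∈ A.erase e, w f, #(A.erase e)) < toLex (∑ f ∈ A, w f, #A) :=
      Prod.Lex.toLex_strictMono <|
        Prod.mk_lt_mk_of_le_of_lt (by linarith [hw e]) (card_erase_lt_of_mem he)
    exact (hmin _ (mem_filter.2 ⟨mem_univ _, hBS⟩)).not_gt hlex
  · -- `(A.erase e)ᶜ = insert e Aᶜ` is then a heavier side strictly lighter than `A`
    have hBcS : (A.erase e)ᶜ ∈ S := mem_filter.2 ⟨mem_univ _, by rw [compl_compl]; linarith⟩
    have hle : ∑ f ∈ A, w f ≤ ∑ f ∈ (A.erase e)ᶜ, w f :=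
      Prod.Lex.monotone_fst _ _ (hmin _ hBcS)
    linarith

end

/-- Plaut–Roughgarden: for two agents with additive nonnegative
utilities (given by weights `wi`, `wj`) over a finite set of goods, there is an
EFX allocation `(Xi, Xiᶜ)` of all the goods in which agent `i` does not envy
agent `j`, and neither agent strongly envies the other. -/
theorem stmt2 {E : Type*} [Fintype E] [DecidableEq E] (wi wj : E → ℝ)
    (hwi : ∀ e, 0 ≤ wi e) (hwj : ∀ e, 0 ≤ wj e) :
    ∃ Xi : Finset E,
      (∑ e ∈ Xiᶜ, wi e) ≤ (∑ e ∈ Xi, wi e) ∧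
      (¬ ∃ e ∈ Xiᶜ, (∑ f ∈ Xi, wi f) < (∑ f ∈ Xiᶜ \ {e}, wi f)) ∧
      (¬ ∃ e ∈ Xi, (∑ f ∈ Xiᶜ, wj f) < (∑ f ∈ Xi \ {e}, wj f)) := by
  obtain ⟨A, hAj, hA⟩ := exists_isEFXCut hwj
  by_cases hAi : ∑ e ∈ Aᶜ, wi e ≤ ∑ e ∈ A, wi e
  · exact ⟨A, hAi, not_stronglyEnvies_of_le hwi hAi, hA⟩
  · have hAci : ∑ e ∈ Aᶜᶜ, wi e ≤ ∑ e ∈ Aᶜ, wi e := by rw [compl_compl]; linarith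
    refine ⟨Aᶜ, hAci, not_stronglyEnvies_of_le hwi hAci, not_stronglyEnvies_of_le hwj ?_⟩
    rwa [compl_compl]
end

section
/- Let G be a bi-valued symmetric multigraph with edge weights α > β ≥ 0, and let K be a heavy component of G that is non-trivial and whose heavy edges induce a multigraph containing either a heavy self-loop or a cycle (i.e., the heavy edges do not induce a multitree). Then there exists a partial envy-free orientation π of K, orienting only heavy edges, such that every vertex i of K satisfies u_i(π_i) ≥ α and at most one oriented edge lies between each pair of vertices. -/
/-!
Pick a heavy edge `e₀` of `K` that is not a bridge of the heavy graph (a self-loop, or an edge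
on a cycle) and root `K` at an endpoint `r` of it. Without `e₀` the component is still
connected, so every other vertex of `K` can take the first edge of a shortest heavy path to `r`,
and `r` takes `e₀`. Distances to `r` strictly decrease along these edges, so no two of them are
parallel, and none is parallel to the deleted `e₀`. Every agent of `K` thus owns one heavy
edge, worth `α` to it; no single edge is worth more than `α` to anybody, and agents outside `K`
value none of the oriented edges.
-/

/-- Bundle of an agent under a partial orientation. -/
def bundleP {V E : Type*} [Fintype E] [DecidableEq V] [DecidableEq E]
    (π : E → Option V) (i : V) : Finset E :=
  Finset.univ.filter (fun e => π e = some i)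

/-- Reachability by paths of heavy edges. -/
def heavyReach {V E : Type*} (ends : E → V × V) (heavy : E → Bool) : V → V → Prop :=
  Relation.ReflTransGen (fun a b => ∃ e, heavy e = true ∧ (ends e = (a, b) ∨ ends e = (b, a)))

/-- The simple graph obtained by condensing the heavy edges. -/
def heavyGraph {V E : Type*} (ends : E → V × V) (heavy : E → Bool) : SimpleGraph V where
  Adj a b := a ≠ b ∧ ∃ e, heavy e = true ∧ (ends e = (a, b) ∨ ends e = (b, a))
  symm := by
    constructor
    rintro a b ⟨hab, e, he, h⟩
    exact ⟨hab.symm, e, he, h.symm⟩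
  loopless := by constructor; rintro a ⟨ha, -⟩; exact ha rfl

/-- Two edges join the same pair of vertices (are parallel). -/
def samePair {V E : Type*} (ends : E → V × V) (e e' : E) : Prop :=
  ends e = ends e' ∨ ends e = (ends e').swap

open SimpleGraph

def endsSym2 {V E : Type*} (ends : E → V × V) (e : E) : Sym2 V :=
  s((ends e).1, (ends e).2)

lemma mem_endsSym2 {V E : Type*} {ends : E → V × V} {e : E} {i : V} :
    i ∈ endsSym2 ends e ↔ i = (ends e).1 ∨ i = (ends e).2 :=
  Sym2.mem_iff

lemma samePair_iff {V E : Type*} {ends : E → V × V} {e e' : E} :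
    samePair ends e e' ↔ endsSym2 ends e = endsSym2 ends e' :=
  Sym2.mk_eq_mk_iff.symm

namespace SimpleGraph

variable {V : Type*} {G : SimpleGraph V}

lemma Reachable.deleteEdges_of_not_isBridge {x y u v : V} (hxy : ¬ G.IsBridge s(x, y))
    (h : G.Reachable u v) : (G.deleteEdges {s(x, y)}).Reachable u v := by
  rw [isBridge_iff, not_not] at hxy
  obtain ⟨p⟩ := h
  induction p with
  | nil => rfl
  | @cons a b _ hab _ ih =>
    refine Reachable.trans ?_ ih
    by_cases he : s(a, b) = s(x, y)
    · rcases Sym2.eq_iff.mp he with ⟨rfl, rfl⟩ | ⟨rfl, rfl⟩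
      · exact hxy
      · exact hxy.symm
    · exact Adj.reachable (deleteEdges_adj.mpr ⟨hab, he⟩)

lemma Reachable.exists_adj_dist_lt {x r : V} (h : G.Reachable x r) (hx : x ≠ r) :
    ∃ y, G.Adj x y ∧ G.dist y r < G.dist x r := by
  obtain ⟨p, hp⟩ := h.exists_walk_length_eq_dist
  cases p with
  | nil => exact absurd rfl hx
  | @cons _ y _ hxy q =>
    refine ⟨y, hxy, ?_⟩
    have := dist_le q
    rw [Walk.length_cons] at hp
    omega

lemma exists_injOn_incident_edge {r : V} {e₀ : Sym2 V} (hr : r ∈ e₀) (he₀ : e₀ ∉ G.edgeSet) :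
    ∃ c : V → Sym2 V, (∀ x, G.Reachable x r → x ∈ c x ∧ c x ∈ insert e₀ G.edgeSet) ∧
      Set.InjOn c {x | G.Reachable x r} := by
  classical
  have hparent : ∀ x, ∃ y, G.Reachable x r → x ≠ r → G.Adj x y ∧ G.dist y r < G.dist x r := by
    intro x
    by_cases h : G.Reachable x r ∧ x ≠ r
    · obtain ⟨y, hy⟩ := h.1.exists_adj_dist_lt h.2
      exact ⟨y, fun _ _ => hy⟩
    · exact ⟨x, fun h₁ h₂ => absurd ⟨h₁, h₂⟩ h⟩
  choose p hp using hparent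
  refine ⟨fun x => if x = r then e₀ else s(x, p x), fun x hx => ?_, ?_⟩
  · by_cases hxr : x = r
    · simp [hxr, hr]
    · simp [hxr, (hp x hx hxr).1]
  · intro x hx y hy hxy
    by_cases hxr : x = r <;> by_cases hyr : y = r <;> simp only [hxr, hyr, ↓reduceIte] at hxy
    · exact hxr.trans hyr.symm
    · exact absurd (hxy ▸ (hp y hy hyr).1 : e₀ ∈ G.edgeSet) he₀
    · exact absurd (hxy ▸ (hp x hx hxr).1 : e₀ ∈ G.edgeSet) he₀
    · rcases Sym2.eq_iff.mp hxy with ⟨h, -⟩ | ⟨hx', hy'⟩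
      · exact h
      · have hx_lt := (hp x hx hxr).2
        have hy_lt := (hp y hy hyr).2
        rw [hy'] at hx_lt
        rw [← hx'] at hy_lt
        omega

end SimpleGraph

section HeavyGraph

variable {V E : Type*} {ends : E → V × V} {heavy : E → Bool}

lemma heavyReach.reachable {a b : V} (h : heavyReach ends heavy a b) :
    (heavyGraph ends heavy).Reachable a b := by
  induction h with
  | refl => rfl
  | @tail x y _ hxy ih =>
    obtain ⟨e, he, hee⟩ := hxy
    by_cases hne : x = y
    · exact hne ▸ ih
    · exact ih.trans (Adj.reachable ⟨hne, e, he, hee⟩)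

lemma ends_mem_of_heavy {K : Finset V} (hmax : ∀ a ∈ K, ∀ b, heavyReach ends heavy a b → b ∈ K)
    {e : E} (he : heavy e = true) {i : V} (hi : i ∈ K) (hie : i ∈ endsSym2 ends e) :
    (ends e).1 ∈ K ∧ (ends e).2 ∈ K := by
  rcases mem_endsSym2.mp hie with rfl | rfl
  · exact ⟨hi, hmax _ hi _ (.single ⟨e, he, Or.inl rfl⟩)⟩
  · exact ⟨hmax _ hi _ (.single ⟨e, he, Or.inr rfl⟩), hi⟩

lemma exists_heavy_endsSym2_eq {z : Sym2 V} (hz : z ∈ (heavyGraph ends heavy).edgeSet) :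
    ∃ e, heavy e = true ∧ endsSym2 ends e = z := by
  induction z using Sym2.ind with
  | h a b =>
    obtain ⟨-, e, he, hab | hba⟩ := hz
    · exact ⟨e, he, by simp [endsSym2, hab]⟩
    · exact ⟨e, he, by simp [endsSym2, hba, Sym2.eq_swap]⟩

/-- A heavy self-loop is never a bridge, and neither is an edge on a cycle. -/
lemma exists_heavy_not_isBridge {K : Finset V}
    (hnotree : (∃ e, ∃ v ∈ K, heavy e = true ∧ ends e = (v, v)) ∨
        (∃ v ∈ K, ∃ p : (heavyGraph ends heavy).Walk v v, p.IsCycle)) :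
    ∃ e, heavy e = true ∧ ∃ r ∈ K, r ∈ endsSym2 ends e ∧
      ¬ (heavyGraph ends heavy).IsBridge (endsSym2 ends e) := by
  rcases hnotree with ⟨e, v, hv, he, hloop⟩ | ⟨v, hv, p, hp⟩
  · refine ⟨e, he, v, hv, by simp [endsSym2, hloop], ?_⟩
    simp [endsSym2, hloop, isBridge_iff]
  · cases p with
    | nil => exact absurd hp Walk.not_isCycle_nil
    | @cons _ b _ hadj _ =>
      obtain ⟨e, he, hee⟩ := hadj.2
      have hcycle : ¬ (heavyGraph ends heavy).IsBridge s(v, b) := fun hb =>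
        hb.notMem_edges_of_isCycle hp (by simp)
      have hvb : endsSym2 ends e = s(v, b) := by
        rcases hee with hee | hee <;> simp [endsSym2, hee, Sym2.eq_swap]
      exact ⟨e, he, v, hv, hvb ▸ Sym2.mem_mk_left v b, hvb ▸ hcycle⟩

structure IsHeavyEdgeChoice (ends : E → V × V) (heavy : E → Bool) (K : Finset V) (g : V → E) :
    Prop where
  heavy_eq : ∀ i ∈ K, heavy (g i) = true
  incident : ∀ i ∈ K, i ∈ endsSym2 ends (g i)
  fst_mem : ∀ i ∈ K, (ends (g i)).1 ∈ K
  snd_mem : ∀ i ∈ K, (ends (g i)).2 ∈ K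
  eq_of_samePair : ∀ i ∈ K, ∀ j ∈ K, samePair ends (g i) (g j) → i = j

lemma IsHeavyEdgeChoice.injOn {K : Finset V} {g : V → E} (hc : IsHeavyEdgeChoice ends heavy K g) :
    Set.InjOn g K :=
  fun i hi j hj hij => hc.eq_of_samePair i hi j hj (Or.inl (congrArg ends hij))

lemma exists_isHeavyEdgeChoice {K : Finset V}
    (hconn : ∀ a ∈ K, ∀ b ∈ K, heavyReach ends heavy a b)
    (hmax : ∀ a ∈ K, ∀ b, heavyReach ends heavy a b → b ∈ K)
    (hnotree : (∃ e, ∃ v ∈ K, heavy e = true ∧ ends e = (v, v)) ∨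
        (∃ v ∈ K, ∃ p : (heavyGraph ends heavy).Walk v v, p.IsCycle)) :
    ∃ g, IsHeavyEdgeChoice ends heavy K g := by
  obtain ⟨e₀, he₀, r, hrK, hr, hbridge⟩ := exists_heavy_not_isBridge hnotree
  set G := (heavyGraph ends heavy).deleteEdges {endsSym2 ends e₀}
  have hreach : ∀ i ∈ K, G.Reachable i r := fun i hi =>
    (hconn i hi r hrK).reachable.deleteEdges_of_not_isBridge hbridge
  obtain ⟨c, hc, hcinj⟩ := exists_injOn_incident_edge (G := G) hr (by simp [G])
  have hlift : ∀ i ∈ K, ∃ e, heavy e = true ∧ endsSym2 ends e = c i := by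
    intro i hi
    rcases (hc i (hreach i hi)).2 with h | h
    · exact ⟨e₀, he₀, h.symm⟩
    · exact exists_heavy_endsSym2_eq (edgeSet_mono (deleteEdges_le _) h)
  have : Nonempty E := ⟨e₀⟩
  choose! g hg hgc using hlift
  have hmem : ∀ i ∈ K, i ∈ endsSym2 ends (g i) := fun i hi => hgc i hi ▸ (hc i (hreach i hi)).1
  have hends : ∀ i ∈ K, (ends (g i)).1 ∈ K ∧ (ends (g i)).2 ∈ K := fun i hi =>
    ends_mem_of_heavy hmax (hg i hi) hi (hmem i hi)
  refine ⟨g, hg, hmem, fun i hi => (hends i hi).1, fun i hi => (hends i hi).2, ?_⟩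
  intro i hi j hj hij
  rw [samePair_iff, hgc i hi, hgc j hj] at hij
  exact hcinj (hreach i hi) (hreach j hj) hij

end HeavyGraph

section Orientation

variable {V E : Type*}

noncomputable def orientChoice [DecidableEq E] (K : Finset V) (g : V → E) (e : E) : Option V :=
  if h : ∃ i ∈ K, g i = e then some h.choose else none

lemma orientChoice_eq_some [DecidableEq E] {K : Finset V} {g : V → E} (hg : Set.InjOn g K)
    {e : E} {v : V} : orientChoice K g e = some v ↔ v ∈ K ∧ g v = e := by
  unfold orientChoice
  split_ifs with h
  · obtain ⟨hK, hg'⟩ := h.choose_spec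
    rw [Option.some.injEq]
    constructor
    · rintro rfl
      exact ⟨hK, hg'⟩
    · rintro ⟨hv, rfl⟩
      exact hg hK hv hg'
  · simpa using fun hv => h ⟨v, hv⟩

lemma exists_of_orientChoice_ne_none [DecidableEq E] {K : Finset V} {g : V → E} {e : E}
    (he : orientChoice K g e ≠ none) : ∃ v ∈ K, g v = e := by
  unfold orientChoice at he
  split_ifs at he with h
  · exact h
  · exact absurd rfl he

lemma bundleP_orientChoice [Fintype E] [DecidableEq V] [DecidableEq E] {K : Finset V}
    {g : V → E} (hg : Set.InjOn g K) (i : V) :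
    bundleP (orientChoice K g) i = if i ∈ K then {g i} else ∅ := by
  ext e
  simp only [bundleP, Finset.mem_filter, Finset.mem_univ, true_and, orientChoice_eq_some hg]
  split_ifs with hi <;> simp [hi, eq_comm]

lemma util_singleton [DecidableEq V] (ends : E → V × V) (w : E → ℝ) (i : V) (e : E) :
    util ends w i {e} = if (ends e).1 = i ∨ (ends e).2 = i then w e else 0 :=
  Finset.sum_singleton _ _

namespace IsHeavyEdgeChoice

variable [Fintype E] [DecidableEq V] [DecidableEq E] {ends : E → V × V} {heavy : E → Bool}
  {K : Finset V} {g : V → E} {w : E → ℝ} {α : ℝ}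

lemma util_self (hc : IsHeavyEdgeChoice ends heavy K g) (hw : ∀ e, heavy e = true → w e = α)
    {i : V} (hi : i ∈ K) : util ends w i (bundleP (orientChoice K g) i) = α := by
  have hinc : (ends (g i)).1 = i ∨ (ends (g i)).2 = i := by
    simpa [eq_comm] using mem_endsSym2.mp (hc.incident i hi)
  rw [bundleP_orientChoice hc.injOn, if_pos hi, util_singleton, if_pos hinc,
    hw _ (hc.heavy_eq i hi)]

lemma util_le (hc : IsHeavyEdgeChoice ends heavy K g) (hw : ∀ e, heavy e = true → w e = α)
    (hα : 0 ≤ α) (i j : V) : util ends w i (bundleP (orientChoice K g) j) ≤ α := by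
  rw [bundleP_orientChoice hc.injOn]
  split_ifs with hj
  · rw [util_singleton, hw _ (hc.heavy_eq j hj)]
    split_ifs <;> simp [hα]
  · simpa [util] using hα

lemma util_eq_zero (hc : IsHeavyEdgeChoice ends heavy K g) {i : V} (hi : i ∉ K) (j : V) :
    util ends w i (bundleP (orientChoice K g) j) = 0 := by
  rw [bundleP_orientChoice hc.injOn]
  split_ifs with hj
  · rw [util_singleton, if_neg]
    rintro (h | h)
    · exact hi (h ▸ hc.fst_mem j hj)
    · exact hi (h ▸ hc.snd_mem j hj)
  · simp [util]

end IsHeavyEdgeChoice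

end Orientation

theorem stmt7_general {V E : Type*} [Fintype E] [DecidableEq V] [DecidableEq E]
    (ends : E → V × V) (heavy : E → Bool) (α β : ℝ) (hβ : 0 ≤ β) (hαβ : β < α)
    (w : E → ℝ) (hw : ∀ e, w e = if heavy e then α else β)
    (K : Finset V)
    -- K is a heavy component:
    (hconn : ∀ a ∈ K, ∀ b ∈ K, heavyReach ends heavy a b)
    (hmax : ∀ a ∈ K, ∀ b, heavyReach ends heavy a b → b ∈ K)
    -- the heavy edges of K contain a heavy self-loop or a cycle:
    (hnotree : (∃ e, ∃ v ∈ K, heavy e = true ∧ ends e = (v, v)) ∨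
        (∃ v ∈ K, ∃ p : (heavyGraph ends heavy).Walk v v, p.IsCycle)) :
    ∃ π : E → Option V,
      (∀ e v, π e = some v → v = (ends e).1 ∨ v = (ends e).2) ∧
      (∀ e, π e ≠ none → heavy e = true ∧ (ends e).1 ∈ K ∧ (ends e).2 ∈ K) ∧
      (∀ i j : V, util ends w i (bundleP π j) ≤ util ends w i (bundleP π i)) ∧
      (∀ i ∈ K, α ≤ util ends w i (bundleP π i)) ∧
      (∀ e e', π e ≠ none → π e' ≠ none → samePair ends e e' → e = e') := by
  obtain ⟨g, hc⟩ := exists_isHeavyEdgeChoice hconn hmax hnotree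
  have hw' : ∀ e, heavy e = true → w e = α := fun e he => by simp [hw, he]
  refine ⟨orientChoice K g, ?_, ?_, ?_, ?_, ?_⟩
  · intro e v hv
    obtain ⟨hvK, rfl⟩ := (orientChoice_eq_some hc.injOn).mp hv
    exact mem_endsSym2.mp (hc.incident v hvK)
  · intro e he
    obtain ⟨v, hvK, rfl⟩ := exists_of_orientChoice_ne_none he
    exact ⟨hc.heavy_eq v hvK, hc.fst_mem v hvK, hc.snd_mem v hvK⟩
  · intro i j
    by_cases hi : i ∈ K
    · rw [hc.util_self hw' hi]
      exact hc.util_le hw' (hβ.trans hαβ.le) i j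
    · rw [hc.util_eq_zero hi, hc.util_eq_zero hi]
  · exact fun i hi => (hc.util_self hw' hi).ge
  · intro e e' he he' hee'
    obtain ⟨v, hvK, rfl⟩ := exists_of_orientChoice_ne_none he
    obtain ⟨v', hvK', rfl⟩ := exists_of_orientChoice_ne_none he'
    rw [hc.eq_of_samePair v hvK v' hvK' hee']

/-- let `K` be a non-trivial heavy component of a bi-valued
symmetric multigraph whose heavy edges contain a heavy self-loop or a cycle
(so they do not induce a multitree). Then there is a partial envy-free
orientation of `K`, orienting only heavy edges (with both ends in `K`), giving
every vertex of `K` utility at least `α`, and orienting at most one edge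
between each pair of vertices. -/
theorem stmt7 {V E : Type*} [Fintype E] [DecidableEq V] [DecidableEq E]
    (ends : E → V × V) (heavy : E → Bool) (α β : ℝ) (hβ : 0 ≤ β) (hαβ : β < α)
    (w : E → ℝ) (hw : ∀ e, w e = if heavy e then α else β)
    (K : Finset V)
    -- K is a heavy component:
    (hconn : ∀ a ∈ K, ∀ b ∈ K, heavyReach ends heavy a b)
    (hmax : ∀ a ∈ K, ∀ b, heavyReach ends heavy a b → b ∈ K)
    -- K is non-trivial:
    (hnontriv : ∃ a ∈ K, ∃ b ∈ K, a ≠ b)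
    -- the heavy edges of K contain a heavy self-loop or a cycle:
    (hnotree : (∃ e, ∃ v ∈ K, heavy e = true ∧ ends e = (v, v)) ∨
        (∃ v ∈ K, ∃ p : (heavyGraph ends heavy).Walk v v, p.IsCycle)) :
    ∃ π : E → Option V,
      (∀ e v, π e = some v → v = (ends e).1 ∨ v = (ends e).2) ∧
      (∀ e, π e ≠ none → heavy e = true ∧ (ends e).1 ∈ K ∧ (ends e).2 ∈ K) ∧
      (∀ i j : V, util ends w i (bundleP π j) ≤ util ends w i (bundleP π i)) ∧
      (∀ i ∈ K, α ≤ util ends w i (bundleP π i)) ∧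
      (∀ e e', π e ≠ none → π e' ≠ none → samePair ends e e' → e = e') :=
  stmt7_general ends heavy α β hβ hαβ w hw K hconn hmax hnotree
end

section
/- Let G be a bi-valued symmetric multigraph with weights α > β ≥ 0 and let π' be a partial envy-free orientation of G. Let i ≠ j be vertices such that π' orients at most one edge between i and j, and suppose either (1) u_i(π'_i) ≥ α and u_j(π'_j) ≥ α, or (2) u_i(π'_i) ≥ β, u_j(π'_j) ≥ β, and all edges between i and j are light. Then there exists an envy-free extension π of π' in which all edges between i and j, and all self-loops at i and at j, are oriented. -/
/-- The set of (non-loop) edges between two distinct vertices. -/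
def edgesBetween {V E : Type*} [Fintype E] [DecidableEq V] [DecidableEq E]
    (ends : E → V × V) (i j : V) : Finset E :=
  Finset.univ.filter (fun e => ends e = (i, j) ∨ ends e = (j, i))

def IsPartialOrientation {V E : Type*} (ends : E → V × V) (π : E → Option V) : Prop :=
  ∀ e v, π e = some v → v = (ends e).1 ∨ v = (ends e).2

def IsEnvyFree {V E : Type*} [Fintype E] [DecidableEq V] [DecidableEq E]
    (ends : E → V × V) (w : E → ℝ) (π : E → Option V) : Prop :=
  ∀ a b, util ends w a (bundleP π b) ≤ util ends w a (bundleP π a)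

def assignTo {V E : Type*} [DecidableEq E] (π : E → Option V) (i j : V) (X Y : Finset E) :
    E → Option V :=
  fun e => if e ∈ X then some i else if e ∈ Y then some j else π e

section Balance

variable {ι : Type*} [DecidableEq ι]

theorem Finset.exists_balanced_partition (U : Finset ι) (w : ι → ℝ) {M : ℝ} (hM : 0 ≤ M)
    (hw : ∀ e ∈ U, 0 ≤ w e ∧ w e ≤ M) :
    ∃ A B : Finset ι, Disjoint A B ∧ A ∪ B = U ∧
      ∑ e ∈ B, w e ≤ ∑ e ∈ A, w e ∧ ∑ e ∈ A, w e ≤ ∑ e ∈ B, w e + M := by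
  induction U using Finset.induction_on with
  | empty => exact ⟨∅, ∅, by simp, by simp, by simp, by simpa using hM⟩
  | insert x U hxU ih =>
    obtain ⟨A, B, hAB, rfl, hBA, hAM⟩ :=
      ih fun e he => hw e (Finset.mem_insert_of_mem he)
    have hxA : x ∉ A := fun h => hxU (Finset.mem_union_left B h)
    have hxB : x ∉ B := fun h => hxU (Finset.mem_union_right A h)
    obtain ⟨hx0, hxM⟩ := hw x (Finset.mem_insert_self x _)
    by_cases hx : ∑ e ∈ B, w e + w x ≤ ∑ e ∈ A, w e
    · refine ⟨A, insert x B, Finset.disjoint_insert_right.2 ⟨hxA, hAB⟩, by simp, ?_, ?_⟩ <;>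
        rw [Finset.sum_insert hxB] <;> linarith
    -- otherwise `x` goes to the lighter side, which then becomes the heavier one
    · refine ⟨insert x B, A, Finset.disjoint_insert_left.2 ⟨hxA, hAB.symm⟩,
        by rw [Finset.insert_union, Finset.union_comm], ?_, ?_⟩ <;>
        rw [Finset.sum_insert hxB] <;> linarith

theorem Finset.exists_envyFree_partition_two_agents (U : Finset ι) (w : ι → ℝ) {M : ℝ}
    (hM : 0 ≤ M) (hw : ∀ e ∈ U, 0 ≤ w e ∧ w e ≤ M) {ui uj ci cj : ℝ} (hci : ci ≤ ui) (hcj : cj ≤ uj)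
    (hMi : M ≤ ui) (hMj : M ≤ uj) (hc : ci = 0 ∨ cj = 0) :
    ∃ A B : Finset ι, Disjoint A B ∧ A ∪ B = U ∧
      ci + ∑ e ∈ B, w e ≤ ui + ∑ e ∈ A, w e ∧ cj + ∑ e ∈ A, w e ≤ uj + ∑ e ∈ B, w e := by
  obtain ⟨A, B, hAB, hU, hBA, hAM⟩ := U.exists_balanced_partition w hM hw
  rcases hc with hc | hc
  · exact ⟨B, A, hAB.symm, by rw [Finset.union_comm, hU], by linarith, by linarith⟩
  · exact ⟨A, B, hAB, hU, by linarith, by linarith⟩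

end Balance

section Utility

variable {V E : Type*} [DecidableEq V] {ends : E → V × V} {w : E → ℝ}

theorem util_nonneg (hw : ∀ e, 0 ≤ w e) (a : V) (S : Finset E) : 0 ≤ util ends w a S :=
  Finset.sum_nonneg fun e _ => by split_ifs <;> simp [hw]

theorem util_mono (hw : ∀ e, 0 ≤ w e) (a : V) {S T : Finset E} (h : S ⊆ T) :
    util ends w a S ≤ util ends w a T :=
  Finset.sum_le_sum_of_subset_of_nonneg h fun e _ _ => by split_ifs <;> simp [hw]

theorem util_union [DecidableEq E] (a : V) {S T : Finset E} (h : Disjoint S T) :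
    util ends w a (S ∪ T) = util ends w a S + util ends w a T :=
  Finset.sum_union h

theorem util_union_le [DecidableEq E] (hw : ∀ e, 0 ≤ w e) (a : V) (S T : Finset E) :
    util ends w a (S ∪ T) ≤ util ends w a S + util ends w a T :=
  calc util ends w a (S ∪ T) ≤ util ends w a (S ∪ T) + util ends w a (S ∩ T) :=
        le_add_of_nonneg_right (util_nonneg hw a _)
    _ = util ends w a S + util ends w a T := Finset.sum_union_inter

theorem util_eq_zero {a : V} {S : Finset E} (h : ∀ e ∈ S, (ends e).1 ≠ a ∧ (ends e).2 ≠ a) :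
    util ends w a S = 0 :=
  Finset.sum_eq_zero fun e he => if_neg (by simpa using h e he)

theorem util_eq_sum {a : V} {S : Finset E} (h : ∀ e ∈ S, (ends e).1 = a ∨ (ends e).2 = a) :
    util ends w a S = ∑ e ∈ S, w e :=
  Finset.sum_congr rfl fun e he => if_pos (h e he)

theorem util_union_le_util_union [DecidableEq E] (hw : ∀ e, 0 ≤ w e) {a : V}
    {S T P Q L L' : Finset E} (hP : ∀ e ∈ P, (ends e).1 = a ∨ (ends e).2 = a)
    (hQ : ∀ e ∈ Q, (ends e).1 = a ∨ (ends e).2 = a)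
    (hL : ∀ e ∈ L, (ends e).1 ≠ a ∧ (ends e).2 ≠ a) (hTQ : Disjoint T Q)
    (h : util ends w a S + ∑ e ∈ P, w e ≤ util ends w a T + ∑ e ∈ Q, w e) :
    util ends w a (S ∪ (P ∪ L)) ≤ util ends w a (T ∪ (Q ∪ L')) :=
  calc util ends w a (S ∪ (P ∪ L))
      ≤ util ends w a S + (util ends w a P + util ends w a L) :=
        (util_union_le hw a _ _).trans (add_le_add_right (util_union_le hw a _ _) _)
    _ ≤ util ends w a T + ∑ e ∈ Q, w e := by rwa [util_eq_sum hP, util_eq_zero hL, add_zero]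
    _ = util ends w a (T ∪ Q) := by rw [util_union a hTQ, util_eq_sum hQ]
    _ ≤ util ends w a (T ∪ (Q ∪ L')) :=
        util_mono hw a (Finset.union_subset_union_right Finset.subset_union_left)

end Utility

section AssignTo

variable {V E : Type*} [DecidableEq E] {ends : E → V × V} {π : E → Option V} {i j : V}
  {X Y : Finset E}

theorem assignTo_eq_some (hX : ∀ e ∈ X, π e = none) (hY : ∀ e ∈ Y, π e = none)
    {e : E} {v : V} (he : π e = some v) : assignTo π i j X Y e = some v := by
  have heX : e ∉ X := fun h => by simp [hX e h] at he
  have heY : e ∉ Y := fun h => by simp [hY e h] at he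
  simp [assignTo, heX, heY, he]

theorem assignTo_ne_none {e : E} (h : π e ≠ none ∨ e ∈ X ∨ e ∈ Y) :
    assignTo π i j X Y e ≠ none := by
  unfold assignTo
  split_ifs <;> simp_all

theorem isPartialOrientation_assignTo (hπ : IsPartialOrientation ends π)
    (hXi : ∀ e ∈ X, i = (ends e).1 ∨ i = (ends e).2)
    (hYj : ∀ e ∈ Y, j = (ends e).1 ∨ j = (ends e).2) :
    IsPartialOrientation ends (assignTo π i j X Y) := by
  intro e v hv
  unfold assignTo at hv
  split_ifs at hv with heX heY
  · exact Option.some_injective V hv ▸ hXi e heX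
  · exact Option.some_injective V hv ▸ hYj e heY
  · exact hπ e v hv

variable [Fintype E] [DecidableEq V] {w : E → ℝ}

theorem bundleP_subset_bundleP_assignTo (hX : ∀ e ∈ X, π e = none)
    (hY : ∀ e ∈ Y, π e = none) (b : V) : bundleP π b ⊆ bundleP (assignTo π i j X Y) b :=
  fun e he => by
    simp only [bundleP, Finset.mem_filter, Finset.mem_univ, true_and] at he ⊢
    exact assignTo_eq_some hX hY he

theorem bundleP_assignTo_left (hij : i ≠ j) (hY : ∀ e ∈ Y, π e = none) :
    bundleP (assignTo π i j X Y) i = bundleP π i ∪ X := by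
  ext e
  simp only [bundleP, Finset.mem_union, Finset.mem_filter, Finset.mem_univ, true_and]
  unfold assignTo
  split_ifs <;> simp_all [hij.symm]

theorem bundleP_assignTo_right (hij : i ≠ j) (hX : ∀ e ∈ X, π e = none)
    (hXY : Disjoint X Y) : bundleP (assignTo π i j X Y) j = bundleP π j ∪ Y := by
  ext e
  simp only [bundleP, Finset.mem_union, Finset.mem_filter, Finset.mem_univ, true_and]
  unfold assignTo
  split_ifs <;> simp_all [Finset.disjoint_left]

theorem bundleP_assignTo_of_ne {b : V} (hbi : b ≠ i) (hbj : b ≠ j)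
    (hX : ∀ e ∈ X, π e = none) (hY : ∀ e ∈ Y, π e = none) :
    bundleP (assignTo π i j X Y) b = bundleP π b := by
  ext e
  simp only [bundleP, Finset.mem_filter, Finset.mem_univ, true_and]
  unfold assignTo
  split_ifs <;> simp_all [hbi.symm, hbj.symm]

theorem util_bundleP_assignTo_of_ne {a : V} (hai : a ≠ i) (haj : a ≠ j)
    (hends : ∀ e ∈ X ∪ Y, ∀ v, (ends e).1 = v ∨ (ends e).2 = v → v = i ∨ v = j) (b : V) :
    util ends w a (bundleP (assignTo π i j X Y) b) = util ends w a (bundleP π b) := by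
  simp only [util, bundleP, Finset.sum_filter]
  refine Finset.sum_congr rfl fun e _ => ?_
  by_cases he : e ∈ X ∪ Y
  · have hinc : ¬((ends e).1 = a ∨ (ends e).2 = a) := fun h => by
      rcases hends e he a h with rfl | rfl <;> simp_all
    simp [hinc]
  · simp only [Finset.mem_union, not_or] at he
    simp [assignTo, he.1, he.2]

theorem isEnvyFree_assignTo (hw : ∀ e, 0 ≤ w e) (hEF : IsEnvyFree ends w π) (hij : i ≠ j)
    (hX : ∀ e ∈ X, π e = none) (hY : ∀ e ∈ Y, π e = none) (hXY : Disjoint X Y)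
    (hends : ∀ e ∈ X ∪ Y, ∀ v, (ends e).1 = v ∨ (ends e).2 = v → v = i ∨ v = j)
    (hi : util ends w i (bundleP π j ∪ Y) ≤ util ends w i (bundleP π i ∪ X))
    (hj : util ends w j (bundleP π i ∪ X) ≤ util ends w j (bundleP π j ∪ Y)) :
    IsEnvyFree ends w (assignTo π i j X Y) := by
  intro a b
  by_cases ha : a = i ∨ a = j
  swap
  · simp only [not_or] at ha
    rw [util_bundleP_assignTo_of_ne ha.1 ha.2 hends,
      util_bundleP_assignTo_of_ne ha.1 ha.2 hends]
    exact hEF a b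
  by_cases hb : b = i ∨ b = j
  swap
  · simp only [not_or] at hb
    calc util ends w a (bundleP (assignTo π i j X Y) b) = util ends w a (bundleP π b) := by
          rw [bundleP_assignTo_of_ne hb.1 hb.2 hX hY]
      _ ≤ util ends w a (bundleP π a) := hEF a b
      _ ≤ util ends w a (bundleP (assignTo π i j X Y) a) :=
          util_mono hw a (bundleP_subset_bundleP_assignTo hX hY a)
  rcases ha with rfl | rfl <;> rcases hb with rfl | rfl
  · exact le_rfl
  · rwa [bundleP_assignTo_left hij hY, bundleP_assignTo_right hij hX hXY]
  · rwa [bundleP_assignTo_left hij hY, bundleP_assignTo_right hij hX hXY]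
  · exact le_rfl

end AssignTo

section EdgesBetween

variable {V E : Type*} [Fintype E] [DecidableEq V] [DecidableEq E]
  {ends : E → V × V} {w : E → ℝ} {π : E → Option V} {i j : V}

theorem edgesBetween_comm (ends : E → V × V) (i j : V) :
    edgesBetween ends j i = edgesBetween ends i j := by
  ext e
  simp [edgesBetween, or_comm]

theorem exists_mem_edgesBetween_of_util_ne_zero (hπ : IsPartialOrientation ends π)
    (hij : i ≠ j) (h : util ends w i (bundleP π j) ≠ 0) :
    ∃ e ∈ edgesBetween ends i j, π e = some j := by
  obtain ⟨e, he, hne⟩ := Finset.exists_ne_zero_of_sum_ne_zero h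
  have hej : π e = some j := (Finset.mem_filter.1 he).2
  have hei : (ends e).1 = i ∨ (ends e).2 = i := by_contra fun hc => hne (if_neg hc)
  refine ⟨e, ?_, hej⟩
  simp only [edgesBetween, Finset.mem_filter, Finset.mem_univ, true_and, Prod.ext_iff]
  rcases hπ e j hej with h1 | h1 <;> rcases hei with h2 | h2 <;> simp_all [eq_comm]

theorem util_bundleP_eq_zero_or (hπ : IsPartialOrientation ends π) (hij : i ≠ j)
    (hone : ((edgesBetween ends i j).filter (fun e => π e ≠ none)).card ≤ 1) :
    util ends w i (bundleP π j) = 0 ∨ util ends w j (bundleP π i) = 0 := by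
  by_contra! h
  obtain ⟨e, he, hej⟩ := exists_mem_edgesBetween_of_util_ne_zero hπ hij h.1
  obtain ⟨f, hf, hfi⟩ := exists_mem_edgesBetween_of_util_ne_zero hπ hij.symm h.2
  rw [edgesBetween_comm] at hf
  have hef : e ≠ f := by rintro rfl; exact hij (Option.some_injective V (hfi.symm.trans hej))
  refine (Finset.one_lt_card.2 ⟨e, ?_, f, ?_, hef⟩).not_ge hone <;> simp_all

end EdgesBetween

section Extension

variable {V E : Type*} [Fintype E] [DecidableEq V] [DecidableEq E]
  {ends : E → V × V} {w : E → ℝ} {π : E → Option V} {i j : V}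

def unorientedLoops (ends : E → V × V) (π : E → Option V) (v : V) : Finset E :=
  Finset.univ.filter (fun e => ends e = (v, v) ∧ π e = none)

theorem exists_envyFree_extension_of_partition (hw : ∀ e, 0 ≤ w e)
    (hπ : IsPartialOrientation ends π) (hEF : IsEnvyFree ends w π) (hij : i ≠ j)
    {A B : Finset E} (hAB : Disjoint A B)
    (hABU : A ∪ B = (edgesBetween ends i j).filter (fun e => π e = none))
    (hi : util ends w i (bundleP π j) + ∑ e ∈ B, w e ≤
      util ends w i (bundleP π i) + ∑ e ∈ A, w e)
    (hj : util ends w j (bundleP π i) + ∑ e ∈ A, w e ≤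
      util ends w j (bundleP π j) + ∑ e ∈ B, w e) :
    ∃ π₁ : E → Option V, IsPartialOrientation ends π₁ ∧
      (∀ e v, π e = some v → π₁ e = some v) ∧ IsEnvyFree ends w π₁ ∧
      (∀ e ∈ edgesBetween ends i j, π₁ e ≠ none) ∧
      (∀ e, ends e = (i, i) ∨ ends e = (j, j) → π₁ e ≠ none) := by
  have hmemAB : ∀ e, e ∈ A ∨ e ∈ B ↔ (ends e = (i, j) ∨ ends e = (j, i)) ∧ π e = none :=
    fun e => by simpa [edgesBetween] using Finset.ext_iff.1 hABU e
  refine ⟨assignTo π i j (A ∪ unorientedLoops ends π i) (B ∪ unorientedLoops ends π j),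
    isPartialOrientation_assignTo hπ ?_ ?_, fun e v => assignTo_eq_some ?_ ?_,
    isEnvyFree_assignTo hw hEF hij ?_ ?_ ?_ ?_
      (util_union_le_util_union hw ?_ ?_ ?_ ?_ hi) (util_union_le_util_union hw ?_ ?_ ?_ ?_ hj),
    fun e he => assignTo_ne_none ?_, fun e he => assignTo_ne_none ?_⟩
  all_goals
    simp only [Finset.disjoint_left, Finset.mem_union, unorientedLoops, bundleP,
      Finset.mem_filter, Finset.mem_univ, true_and, edgesBetween] at *
    grind [Prod.ext_iff]

end Extension

/-- extension lemma. Given a partial envy-free orientation `π'`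
of a bi-valued symmetric multigraph that orients at most one edge between
distinct vertices `i` and `j`, if (1) both `i` and `j` already receive utility
at least `α`, or (2) both receive at least `β` and all edges between `i` and
`j` are light, then `π'` extends to an envy-free partial orientation that
orients all edges between `i` and `j` and all self-loops at `i` and `j`. -/
theorem stmt9 {V E : Type*} [Fintype E] [DecidableEq V] [DecidableEq E]
    (ends : E → V × V) (heavy : E → Bool) (α β : ℝ) (hβ : 0 ≤ β) (hαβ : β < α)
    (w : E → ℝ) (hw : ∀ e, w e = if heavy e then α else β)
    (π' : E → Option V)
    (horient : ∀ e v, π' e = some v → v = (ends e).1 ∨ v = (ends e).2)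
    (hEF : ∀ i j : V, util ends w i (bundleP π' j) ≤ util ends w i (bundleP π' i))
    (i j : V) (hij : i ≠ j)
    (hone : (((edgesBetween ends i j).filter (fun e => π' e ≠ none)).card ≤ 1))
    (hcond :
      (α ≤ util ends w i (bundleP π' i) ∧ α ≤ util ends w j (bundleP π' j)) ∨
      (β ≤ util ends w i (bundleP π' i) ∧ β ≤ util ends w j (bundleP π' j) ∧
        ∀ e ∈ edgesBetween ends i j, heavy e = false)) :
    ∃ π : E → Option V,
      -- π is a partial orientation extending π':
      (∀ e v, π e = some v → v = (ends e).1 ∨ v = (ends e).2) ∧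
      (∀ e v, π' e = some v → π e = some v) ∧
      -- π is envy-free:
      (∀ a b : V, util ends w a (bundleP π b) ≤ util ends w a (bundleP π a)) ∧
      -- all edges between i and j are oriented:
      (∀ e ∈ edgesBetween ends i j, π e ≠ none) ∧
      -- all self-loops at i and at j are oriented:
      (∀ e, ends e = (i, i) ∨ ends e = (j, j) → π e ≠ none) := by
  have hw0 : ∀ e, 0 ≤ w e := fun e => by rw [hw e]; split_ifs <;> linarith
  set U := (edgesBetween ends i j).filter (fun e => π' e = none)
  obtain ⟨M, hM0, hMi, hMj, hMU⟩ : ∃ M, 0 ≤ M ∧ M ≤ util ends w i (bundleP π' i) ∧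
      M ≤ util ends w j (bundleP π' j) ∧ ∀ e ∈ U, w e ≤ M := by
    rcases hcond with ⟨hi, hj⟩ | ⟨hi, hj, hlight⟩
    · exact ⟨α, by linarith, hi, hj, fun e _ => by rw [hw e]; split_ifs <;> linarith⟩
    · exact ⟨β, hβ, hi, hj, fun e he => by
        simp [hw e, hlight e (Finset.mem_of_mem_filter e he)]⟩
  obtain ⟨A, B, hAB, hABU, hi, hj⟩ := U.exists_envyFree_partition_two_agents w hM0
    (fun e he => ⟨hw0 e, hMU e he⟩) (hEF i j) (hEF j i) hMi hMj
    (util_bundleP_eq_zero_or horient hij hone)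
  exact exists_envyFree_extension_of_partition hw0 horient hEF hij hAB hABU hi hj
end

section
/- Let G be a connected bi-valued symmetric multigraph (weights α > β ≥ 0) that contains at least one non-trivial heavy component and no heavy component whose heavy edges induce a non-trivial odd multitree. Then there exists a partial envy-free orientation π^G of G such that all heavy edges are oriented, the unoriented edges form a matching in G, and π^G is privately envy-free between the endvertices of every unoriented edge. -/
/-- A vertex is an endvertex of an edge. -/
def incid {V E : Type*} (ends : E → V × V) (i : V) (e : E) : Prop :=
  (ends e).1 = i ∨ (ends e).2 = i

/-- Reachability by paths of edges. -/
def reach {V E : Type*} (ends : E → V × V) (sel : E → Bool) : V → V → Prop :=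
  Relation.ReflTransGen (fun a b => ∃ e, sel e = true ∧ (ends e = (a, b) ∨ ends e = (b, a)))

/-- The heavy component of a vertex `v` has heavy edges inducing a non-trivial
odd multitree: it has at least two vertices, contains no heavy self-loop, its
condensed heavy graph is acyclic, and every adjacent pair of its vertices is
joined by an odd number of heavy edges. -/
def oddMultitreeAt {V E : Type*} [Fintype E] [DecidableEq V] [DecidableEq E]
    (ends : E → V × V) (heavy : E → Bool) (v : V) : Prop :=
  (∃ b, b ≠ v ∧ reach ends heavy v b) ∧
  (∀ e u, heavy e = true → ends e = (u, u) → ¬ reach ends heavy v u) ∧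
  (∀ u, reach ends heavy v u → ∀ p : (heavyGraph ends heavy).Walk u u, ¬ p.IsCycle) ∧
  (∀ a b, reach ends heavy v a → (heavyGraph ends heavy).Adj a b →
    Odd (((edgesBetween ends a b).filter (fun e => heavy e = true)).card))

/-!
Every vertex `v` claims a parallel class at `v` containing an edge, a heavy one if `v` has a
heavy neighbour, such that only classes with an even positive number of heavy edges are claimed
twice. Each class is split evenly between its endvertices, kind by kind. An odd leftover heavy
edge goes to a claiming endvertex; an odd leftover light edge goes to the other endvertex if the
heavy edges are odd, and otherwise to a claiming endvertex, staying unoriented only if both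
endvertices claim the class. So unoriented edges form a matching and are privately envy-free, and
every vertex receives an edge of the class it claims: this compensates for any leftover it loses
in another class, which gives envy-freeness.

Claims exist. Outside the non-trivial heavy components, vertices claim the first class of a
shortest path to them. A non-trivial heavy component that is not an odd multitree has a heavy
loop, a class with an even number of heavy edges, or a cycle; this gives a root class claimed by
a root, and the other vertices claim the first class of a shortest heavy path to the root that
avoids the root class.
-/

open Finset

namespace BiValued

section Split

variable {E V : Type*} [DecidableEq E] [DecidableEq V]

theorem exists_halves (S : Finset E) :
    ∃ A ⊆ S, ∃ B ⊆ S \ A, #A = #S / 2 ∧ #B = #S / 2 := by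
  obtain ⟨A, hAS, hA⟩ := exists_subset_card_eq (show #S / 2 ≤ #S by omega)
  obtain ⟨B, hBS, hB⟩ := exists_subset_card_eq
    (show #S / 2 ≤ #(S \ A) by rw [card_sdiff_of_subset hAS]; omega)
  exact ⟨A, hAS, B, hBS, hA, hB⟩

theorem exists_balanced_split (S : Finset E) (x y : V) (t : Option V) :
    ∃ σ : E → Option V, (∀ e, σ e = some x ∨ σ e = some y ∨ σ e = t) ∧
      ∀ o, #(S.filter (σ · = o)) = (if some x = o then #S / 2 else 0) +
        (if some y = o then #S / 2 else 0) + (if t = o then #S % 2 else 0) := by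
  obtain ⟨A, hAS, B, hBS, hA, hB⟩ := exists_halves S
  set σ : E → Option V := fun e => if e ∈ A then some x else if e ∈ B then some y else t
  refine ⟨σ, fun e => by simp only [σ]; split_ifs <;> simp, fun o => ?_⟩
  have count_const : ∀ (T : Finset E) (c : Option V), (∀ e ∈ T, σ e = c) →
      #(T.filter (σ · = o)) = if c = o then #T else 0 := by
    intro T c hc
    split_ifs with ho
    · exact congrArg card (filter_true_of_mem fun e he => (hc e he).trans ho)
    · exact card_eq_zero.2 (filter_false_of_mem fun e he h => ho (h ▸ hc e he).symm)
  have hBA : Disjoint B A := disjoint_of_subset_left hBS sdiff_disjoint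
  have hS : S = A ∪ (B ∪ ((S \ A) \ B)) := by
    ext e; simp only [mem_union, mem_sdiff]
    constructor
    · tauto
    · rintro (h | h | h)
      exacts [hAS h, (mem_sdiff.1 (hBS h)).1, h.1.1]
  have hAB : Disjoint A (B ∪ ((S \ A) \ B)) :=
    disjoint_union_right.2 ⟨hBA.symm, disjoint_of_subset_right sdiff_subset disjoint_sdiff⟩
  nth_rewrite 1 [hS]
  rw [filter_union, card_union_of_disjoint (disjoint_filter_filter hAB), filter_union,
    card_union_of_disjoint (disjoint_filter_filter disjoint_sdiff),
    count_const A _ fun e he => if_pos he,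
    count_const B _ fun e he => by simp only [σ]; rw [if_neg (disjoint_left.1 hBA he), if_pos he],
    count_const _ t fun e he => by
      simp only [σ]; rw [if_neg (mem_sdiff.1 (mem_sdiff.1 he).1).2, if_neg (mem_sdiff.1 he).2],
    card_sdiff_of_subset hBS, card_sdiff_of_subset hAS, hA, hB]
  split_ifs <;> omega

noncomputable def splitOf (S : Finset E) (x y : V) (t : Option V) : E → Option V :=
  (exists_balanced_split S x y t).choose

theorem splitOf_spec (S : Finset E) (x y : V) (t : Option V) :
    (∀ e, splitOf S x y t e = some x ∨ splitOf S x y t e = some y ∨ splitOf S x y t e = t) ∧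
      ∀ o, #(S.filter (splitOf S x y t · = o)) = (if some x = o then #S / 2 else 0) +
        (if some y = o then #S / 2 else 0) + (if t = o then #S % 2 else 0) :=
  (exists_balanced_split S x y t).choose_spec

end Split

/-- Parents along shortest walks to `S` are strictly closer to `S`, so no edge is the parent edge
of both its endvertices. -/
theorem _root_.SimpleGraph.exists_parent_injOn {V : Type*} (G : SimpleGraph V) (S : Set V) :
    ∃ par : V → V, let D := {v | (∃ a ∈ S, G.Reachable v a) ∧ v ∉ S}
      (∀ v ∈ D, G.Adj v (par v)) ∧ Set.InjOn (fun v => s(v, par v)) D := by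
  let dist : V → ℕ := fun v => sInf {n | ∃ a ∈ S, ∃ p : G.Walk v a, p.length = n}
  have step : ∀ v, ∃ u, (∃ a ∈ S, G.Reachable v a) → v ∉ S →
      G.Adj v u ∧ dist u < dist v := by
    intro v
    by_cases hv : (∃ a ∈ S, G.Reachable v a) ∧ v ∉ S
    · obtain ⟨⟨a, ha, ⟨p⟩⟩, hvS⟩ := hv
      obtain ⟨b, hb, q, hq⟩ := Nat.sInf_mem
        (s := {n | ∃ a ∈ S, ∃ p : G.Walk v a, p.length = n}) ⟨_, a, ha, p, rfl⟩
      cases q with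
      | nil => exact absurd hb hvS
      | cons h q =>
        refine ⟨_, fun _ _ => ⟨h, ?_⟩⟩
        have : dist _ ≤ q.length := Nat.sInf_le ⟨b, hb, q, rfl⟩
        change q.length + 1 = dist v at hq
        omega
    · exact ⟨v, fun h h' => absurd ⟨h, h'⟩ hv⟩
  choose par hpar using step
  refine ⟨par, fun v hv => (hpar v hv.1 hv.2).1, fun u hu v hv huv => ?_⟩
  rcases Sym2.eq_iff.1 huv with ⟨h, -⟩ | ⟨hu', hv'⟩
  · exact h
  · have h1 := (hpar u hu.1 hu.2).2
    have h2 := (hpar v hv.1 hv.2).2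
    rw [hv'] at h1
    rw [← hu'] at h2
    omega

theorem _root_.Sym2.out_eq_or {V : Type*} {q : Sym2 V} {x y : V} (h : q = s(x, y)) :
    q.out = (x, y) ∨ q.out = (y, x) :=
  (Sym2.mk_eq_mk_iff (p := q.out) (q := (x, y))).1 (h ▸ q.out_eq)

theorem _root_.Sym2.out_fst_ne_out_snd {V : Type*} {q : Sym2 V} (hq : ¬ q.IsDiag) :
    q.out.1 ≠ q.out.2 := fun h =>
  hq (q.out_eq ▸ Sym2.mk_isDiag_iff.2 h)

theorem _root_.Sym2.eq_out_fst_or_eq_out_snd {V : Type*} {q : Sym2 V} {v : V} (hv : v ∈ q) :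
    v = q.out.1 ∨ v = q.out.2 :=
  Sym2.mem_iff.1 (by rwa [show s(q.out.1, q.out.2) = q from q.out_eq])

section Multigraph

variable {V E : Type*} (ends : E → V × V)

def edgeClass (e : E) : Sym2 V := s((ends e).1, (ends e).2)

theorem edgeClass_eq_iff {e : E} {a b : V} :
    edgeClass ends e = s(a, b) ↔ ends e = (a, b) ∨ ends e = (b, a) :=
  Sym2.mk_eq_mk_iff (p := ends e) (q := (a, b))

theorem incid_iff_mem {i : V} {e : E} : incid ends i e ↔ i ∈ edgeClass ends e := by
  rw [edgeClass, Sym2.mem_iff, incid, eq_comm, eq_comm (a := (ends e).2)]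

theorem heavyGraph_adj {sel : E → Bool} {a b : V} :
    (heavyGraph ends sel).Adj a b ↔
      a ≠ b ∧ ∃ e, sel e = true ∧ edgeClass ends e = s(a, b) := by
  simp only [heavyGraph, edgeClass_eq_iff]

variable (heavy : E → Bool) in
abbrev HasHeavyNeighbor (v : V) : Prop := ∃ u, (heavyGraph ends heavy).Adj v u

variable (heavy : E → Bool) in
abbrev heavyComponent (v : V) : (heavyGraph ends heavy).ConnectedComponent :=
  (heavyGraph ends heavy).connectedComponentMk v

theorem heavyComponent_eq_of_adj {heavy : E → Bool} {a b : V}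
    (h : (heavyGraph ends heavy).Adj a b) :
    heavyComponent ends heavy a = heavyComponent ends heavy b :=
  SimpleGraph.ConnectedComponent.connectedComponentMk_eq_of_adj h

theorem reach_iff_reachable {sel : E → Bool} {a b : V} :
    reach ends sel a b ↔ (heavyGraph ends sel).Reachable a b := by
  rw [SimpleGraph.reachable_iff_reflTransGen, reach]
  constructor
  · intro h
    induction h with
    | refl => rfl
    | @tail x y _ hxy ih =>
      by_cases h : x = y
      · exact h ▸ ih
      · exact ih.tail ⟨h, hxy⟩
  · exact Relation.ReflTransGen.mono (fun x y (h : (heavyGraph ends sel).Adj x y) => h.2) _ _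

variable [DecidableEq V] [Fintype E]

theorem mem_edgesBetween [DecidableEq E] {e : E} {a b : V} :
    e ∈ edgesBetween ends a b ↔ edgeClass ends e = s(a, b) := by
  simp [edgesBetween, edgeClass_eq_iff]

variable (heavy : E → Bool) in
def classEdges (q : Sym2 V) (b : Bool) : Finset E :=
  univ.filter fun e => edgeClass ends e = q ∧ heavy e = b

variable {ends} {heavy : E → Bool}

theorem mem_classEdges {q : Sym2 V} {b : Bool} {e : E} :
    e ∈ classEdges ends heavy q b ↔ edgeClass ends e = q ∧ heavy e = b := by
  simp [classEdges]

theorem heavyGraph_adj_of_classEdges_nonempty {a b : V} (hab : a ≠ b)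
    (h : (classEdges ends heavy s(a, b) true).Nonempty) : (heavyGraph ends heavy).Adj a b := by
  obtain ⟨e, he⟩ := h
  rw [mem_classEdges] at he
  exact (heavyGraph_adj ends).2 ⟨hab, e, he.2, he.1⟩

theorem classEdges_nonempty_of_adj {a b : V} (h : (heavyGraph ends heavy).Adj a b) :
    (classEdges ends heavy s(a, b) true).Nonempty := by
  obtain ⟨-, e, he, hab⟩ := (heavyGraph_adj ends).1 h
  exact ⟨e, mem_classEdges.2 ⟨hab, he⟩⟩

theorem filter_edgesBetween_eq_classEdges [DecidableEq E] (a b : V) :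
    (edgesBetween ends a b).filter (fun e => heavy e = true) =
      classEdges ends heavy s(a, b) true := by
  ext e
  simp [mem_edgesBetween, mem_classEdges]

end Multigraph

section Orientation

variable {V E : Type*} [DecidableEq V] {ends : E → V × V} {heavy : E → Bool}

variable (claim : V → Sym2 V)

noncomputable def heavyTarget (q : Sym2 V) : V := if claim q.out.1 = q then q.out.1 else q.out.2

noncomputable def otherTarget (q : Sym2 V) : V := if claim q.out.1 = q then q.out.2 else q.out.1

variable {claim}

theorem heavyTarget_eq_left {x y : V} (hx : claim x = s(x, y)) (hy : claim y ≠ s(x, y)) :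
    heavyTarget claim s(x, y) = x := by
  unfold heavyTarget
  rcases Sym2.out_eq_or (q := s(x, y)) rfl with h | h <;> simp [h, hx, hy]

theorem heavyTarget_otherTarget_eq (x y : V) :
    heavyTarget claim s(x, y) = x ∧ otherTarget claim s(x, y) = y ∨
      heavyTarget claim s(x, y) = y ∧ otherTarget claim s(x, y) = x := by
  unfold heavyTarget otherTarget
  rcases Sym2.out_eq_or (q := s(x, y)) rfl with h | h <;> rw [h] <;> split_ifs <;> simp

variable [Fintype E]

variable (ends heavy) in
/-- Every vertex claims a parallel class at it, from which the orientation will give it an edge. -/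
structure IsClaim (claim : V → Sym2 V) : Prop where
  mem : ∀ v, v ∈ claim v
  exists_edge : ∀ v, ∃ e, edgeClass ends e = claim v
  heavy_nonempty : ∀ v, HasHeavyNeighbor ends heavy v →
    (classEdges ends heavy (claim v) true).Nonempty
  even_of_eq : ∀ u v, u ≠ v → claim u = claim v →
    Even #(classEdges ends heavy (claim v) true) ∧ (classEdges ends heavy (claim v) true).Nonempty

variable (claim : V → Sym2 V)

variable (ends heavy) in
noncomputable def lightTarget (q : Sym2 V) : Option V :=
  if Odd #(classEdges ends heavy q true) then some (otherTarget claim q)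
  else if claim q.out.1 = q ∧ claim q.out.2 = q then none
  else some (heavyTarget claim q)

variable (ends heavy) in
/-- Where the odd leftover edge of kind `b` of the class `q` goes; `none` leaves it unoriented. -/
noncomputable def target (q : Sym2 V) (b : Bool) : Option V :=
  if b then some (heavyTarget claim q) else lightTarget ends heavy claim q

variable {claim}

theorem lightTarget_of_not_odd {x y : V} (hn : ¬ Odd #(classEdges ends heavy s(x, y) true)) :
    lightTarget ends heavy claim s(x, y) =
      if claim x = s(x, y) ∧ claim y = s(x, y) then none
      else some (heavyTarget claim s(x, y)) := by
  unfold lightTarget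
  rcases Sym2.out_eq_or (q := s(x, y)) rfl with h | h <;> simp only [h, if_neg hn, and_comm]

theorem lightTarget_of_odd {q : Sym2 V} (hn : Odd #(classEdges ends heavy q true)) :
    lightTarget ends heavy claim q = some (otherTarget claim q) := by
  simp [lightTarget, hn]

theorem heavyTarget_mem (q : Sym2 V) : heavyTarget claim q ∈ q := by
  unfold heavyTarget; split_ifs
  exacts [q.out_fst_mem, q.out_snd_mem]

theorem otherTarget_mem (q : Sym2 V) : otherTarget claim q ∈ q := by
  unfold otherTarget; split_ifs
  exacts [q.out_snd_mem, q.out_fst_mem]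

theorem mem_of_target_eq_some {q : Sym2 V} {b : Bool} {v : V}
    (h : target ends heavy claim q b = some v) : v ∈ q := by
  unfold target lightTarget at h
  split_ifs at h <;> cases h
  exacts [heavyTarget_mem q, otherTarget_mem q, heavyTarget_mem q]

variable (ends heavy) in
def share (π : E → Option V) (v : V) (q : Sym2 V) (b : Bool) : ℕ :=
  #((classEdges ends heavy q b).filter (π · = some v))

theorem exists_edge_of_share_pos {π : E → Option V} {v : V} {q : Sym2 V} {b : Bool}
    (h : 0 < share ends heavy π v q b) :
    ∃ e, π e = some v ∧ edgeClass ends e = q ∧ heavy e = b := by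
  obtain ⟨e, he⟩ := card_pos.1 h
  obtain ⟨he, hπ⟩ := mem_filter.1 he
  exact ⟨e, hπ, mem_classEdges.1 he⟩

theorem lightTarget_eq_none {q : Sym2 V} (h : lightTarget ends heavy claim q = none) :
    ¬ Odd #(classEdges ends heavy q true) ∧ ∀ v ∈ q, claim v = q := by
  unfold lightTarget at h
  split_ifs at h with hodd hcl
  refine ⟨hodd, fun v hv => ?_⟩
  rcases Sym2.eq_out_fst_or_eq_out_snd hv with rfl | rfl <;> simp [hcl]

variable [DecidableEq E]

variable (ends heavy claim) in
noncomputable def orient (e : E) : Option V :=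
  if (ends e).1 = (ends e).2 then some (ends e).1
  else splitOf (classEdges ends heavy (edgeClass ends e) (heavy e)) (edgeClass ends e).out.1
    (edgeClass ends e).out.2 (target ends heavy claim (edgeClass ends e) (heavy e)) e

theorem orient_of_loop {e : E} (h : (ends e).1 = (ends e).2) :
    orient ends heavy claim e = some (ends e).1 := if_pos h

theorem orient_of_mem_classEdges {q : Sym2 V} (hq : ¬ q.IsDiag) {b : Bool} {e : E}
    (he : e ∈ classEdges ends heavy q b) :
    orient ends heavy claim e = splitOf (classEdges ends heavy q b) q.out.1 q.out.2
      (target ends heavy claim q b) e := by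
  obtain ⟨rfl, rfl⟩ := mem_classEdges.1 he
  exact if_neg fun h => hq (Sym2.mk_isDiag_iff.2 h)

theorem card_filter_orient {q : Sym2 V} (hq : ¬ q.IsDiag) (b : Bool) (o : Option V) :
    #((classEdges ends heavy q b).filter (orient ends heavy claim · = o)) =
      (if some q.out.1 = o then #(classEdges ends heavy q b) / 2 else 0) +
        (if some q.out.2 = o then #(classEdges ends heavy q b) / 2 else 0) +
        (if target ends heavy claim q b = o then #(classEdges ends heavy q b) % 2 else 0) := by
  rw [← (splitOf_spec _ _ _ _).2 o]
  congr 1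
  exact filter_congr fun e he => by rw [orient_of_mem_classEdges (claim := claim) hq he]

theorem orient_eq_or {e : E} (hl : (ends e).1 ≠ (ends e).2) :
    orient ends heavy claim e = some (edgeClass ends e).out.1 ∨
      orient ends heavy claim e = some (edgeClass ends e).out.2 ∨
      orient ends heavy claim e = target ends heavy claim (edgeClass ends e) (heavy e) := by
  rw [orient, if_neg hl]
  exact (splitOf_spec _ _ _ _).1 e

theorem orient_mem_ends {e : E} {v : V} (h : orient ends heavy claim e = some v) :
    v = (ends e).1 ∨ v = (ends e).2 := by
  by_cases hl : (ends e).1 = (ends e).2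
  · rw [orient_of_loop hl] at h
    exact Or.inl (Option.some.inj h).symm
  · refine Sym2.mem_iff.1 (show v ∈ edgeClass ends e from ?_)
    rcases orient_eq_or (heavy := heavy) (claim := claim) hl with h' | h' | h' <;> rw [h'] at h
    · exact Option.some.inj h ▸ Sym2.out_fst_mem _
    · exact Option.some.inj h ▸ Sym2.out_snd_mem _
    · exact mem_of_target_eq_some h

theorem orient_ne_none_of_heavy {e : E} (he : heavy e = true) :
    orient ends heavy claim e ≠ none := by
  by_cases hl : (ends e).1 = (ends e).2
  · simp [orient_of_loop hl]
  · rcases orient_eq_or (heavy := heavy) (claim := claim) hl with h | h | h <;>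
      simp [h, he, target]

theorem share_orient {q : Sym2 V} (hq : ¬ q.IsDiag) {v : V} (hv : v ∈ q) (b : Bool) :
    share ends heavy (orient ends heavy claim) v q b = #(classEdges ends heavy q b) / 2 +
      if target ends heavy claim q b = some v then #(classEdges ends heavy q b) % 2 else 0 := by
  rw [share, card_filter_orient hq]
  have hne := Sym2.out_fst_ne_out_snd hq
  rcases Sym2.eq_out_fst_or_eq_out_snd hv with rfl | rfl <;> simp [hne, hne.symm]

theorem card_filter_orient_none {q : Sym2 V} (hq : ¬ q.IsDiag) (b : Bool) :
    #((classEdges ends heavy q b).filter (orient ends heavy claim · = none)) =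
      if target ends heavy claim q b = none then #(classEdges ends heavy q b) % 2 else 0 := by
  simp [card_filter_orient hq]

end Orientation

section Claims

variable {V E : Type*} [Fintype E] [DecidableEq V] [DecidableEq E]
  {ends : E → V × V} {heavy : E → Bool} {claim : V → Sym2 V}

theorem share_orient_pos {q : Sym2 V} (hq : ¬ q.IsDiag) {v : V} (hv : v ∈ q) {b : Bool}
    (hn : (classEdges ends heavy q b).Nonempty)
    (ht : Odd #(classEdges ends heavy q b) → target ends heavy claim q b = some v) :
    0 < share ends heavy (orient ends heavy claim) v q b := by
  rw [share_orient hq hv]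
  have hpos := hn.card_pos
  rcases Nat.even_or_odd #(classEdges ends heavy q b) with he | ho
  · have := he.two_dvd; omega
  · rw [if_pos (ht ho), Nat.odd_iff.1 ho]; omega

theorem exists_orient_eq_of_isClaim (hc : IsClaim ends heavy claim) (v : V) :
    ∃ e, orient ends heavy claim e = some v ∧ edgeClass ends e = claim v ∧
      (HasHeavyNeighbor ends heavy v → heavy e = true) := by
  obtain ⟨u, hu⟩ := Sym2.mem_iff_exists.1 (hc.mem v)
  by_cases hvu : v = u
  · subst hvu
    have : ∃ e, edgeClass ends e = claim v ∧
        (HasHeavyNeighbor ends heavy v → heavy e = true) := by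
      by_cases hB : HasHeavyNeighbor ends heavy v
      · obtain ⟨e, he⟩ := hc.heavy_nonempty v hB
        exact ⟨e, (mem_classEdges.1 he).1, fun _ => (mem_classEdges.1 he).2⟩
      · obtain ⟨e, he⟩ := hc.exists_edge v
        exact ⟨e, he, fun h => absurd h hB⟩
    obtain ⟨e, he, hheavy⟩ := this
    have hloop : ends e = (v, v) := by simpa using (edgeClass_eq_iff ends).1 (he.trans hu)
    exact ⟨e, by rw [orient_of_loop (by rw [hloop]), hloop], he, hheavy⟩
  have hq : ¬ (claim v).IsDiag := by rw [hu]; exact fun h => hvu (Sym2.mk_isDiag_iff.1 h)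
  have hshared : claim u = claim v → (classEdges ends heavy s(v, u) true).Nonempty ∧
      Even #(classEdges ends heavy s(v, u) true) := fun h => by
    rw [← hu]; exact (hc.even_of_eq u v (Ne.symm hvu) h).symm
  by_cases hB : HasHeavyNeighbor ends heavy v
  · have hn := hc.heavy_nonempty v hB
    have hpos := share_orient_pos (claim := claim) hq (hc.mem v) hn fun hodd => by
      rw [hu] at hodd ⊢
      refine congrArg some (heavyTarget_eq_left (hu ▸ rfl) fun h => ?_)
      exact Nat.not_even_iff_odd.2 hodd (hshared (h.trans hu.symm)).2
    obtain ⟨e, he, hcl, hheavy⟩ := exists_edge_of_share_pos hpos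
    exact ⟨e, he, hcl, fun _ => hheavy⟩
  · have hnotodd : ¬ Odd #(classEdges ends heavy s(v, u) true) := fun hodd =>
      hB ⟨u, heavyGraph_adj_of_classEdges_nonempty hvu (card_pos.1 hodd.pos)⟩
    obtain ⟨e, he⟩ := hc.exists_edge v
    have hlight : heavy e = false := by
      by_contra hh
      exact hB ⟨u, (heavyGraph_adj ends).2 ⟨hvu, e, by simpa using hh, he.trans hu⟩⟩
    have hpos := share_orient_pos (claim := claim) (b := false) hq (hc.mem v)
      ⟨e, mem_classEdges.2 ⟨he, hlight⟩⟩ fun _ => by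
        have hu' : claim u ≠ s(v, u) := fun h =>
          hB ⟨u, heavyGraph_adj_of_classEdges_nonempty hvu (hshared (h.trans hu.symm)).1⟩
        rw [hu, target, if_neg Bool.false_ne_true, lightTarget_of_not_odd hnotodd,
          if_neg fun h => hu' h.2, heavyTarget_eq_left hu hu']
    obtain ⟨e, he, hcl, -⟩ := exists_edge_of_share_pos hpos
    exact ⟨e, he, hcl, fun h => absurd h hB⟩

theorem share_orient_le_succ {x y : V} (hxy : x ≠ y) (b : Bool) :
    share ends heavy (orient ends heavy claim) y s(x, y) b ≤
      share ends heavy (orient ends heavy claim) x s(x, y) b + 1 := by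
  have hq : ¬ s(x, y).IsDiag := fun h => hxy (Sym2.mk_isDiag_iff.1 h)
  rw [share_orient hq (Sym2.mem_mk_right x y), share_orient hq (Sym2.mem_mk_left x y)]
  have := Nat.mod_lt #(classEdges ends heavy s(x, y) b) two_pos
  split_ifs <;> omega

theorem share_orient_light_le_of_heavy_lt {x y : V} (hxy : x ≠ y)
    (h : share ends heavy (orient ends heavy claim) x s(x, y) true <
      share ends heavy (orient ends heavy claim) y s(x, y) true) :
    share ends heavy (orient ends heavy claim) y s(x, y) false ≤
      share ends heavy (orient ends heavy claim) x s(x, y) false ∧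
      (heavyGraph ends heavy).Adj x y := by
  have hq : ¬ s(x, y).IsDiag := fun h => hxy (Sym2.mk_isDiag_iff.1 h)
  rw [share_orient hq (Sym2.mem_mk_right x y), share_orient hq (Sym2.mem_mk_left x y)] at h ⊢
  simp only [target, if_true, Option.some.injEq] at h
  split_ifs at h with h1 h2 <;> try omega
  have hodd : Odd #(classEdges ends heavy s(x, y) true) := Nat.odd_iff.2 (by omega)
  have hother : otherTarget claim s(x, y) = x := by
    rcases heavyTarget_otherTarget_eq (claim := claim) x y with ⟨h3, -⟩ | ⟨-, h3⟩
    exacts [absurd h3 h1, h3]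
  refine ⟨?_, heavyGraph_adj_of_classEdges_nonempty hxy (card_pos.1 hodd.pos)⟩
  simp only [target, Bool.false_eq_true, if_false, lightTarget_of_odd hodd, hother,
    Option.some.injEq, if_neg hxy]
  omega

theorem share_orient_le_of_claim (hc : IsClaim ends heavy claim) {x y : V} (hxy : x ≠ y)
    (hx : claim x = s(x, y)) :
    share ends heavy (orient ends heavy claim) y s(x, y) true ≤
        share ends heavy (orient ends heavy claim) x s(x, y) true ∧
      (share ends heavy (orient ends heavy claim) y s(x, y) true =
          share ends heavy (orient ends heavy claim) x s(x, y) true →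
        share ends heavy (orient ends heavy claim) y s(x, y) false ≤
          share ends heavy (orient ends heavy claim) x s(x, y) false) := by
  have hq : ¬ s(x, y).IsDiag := fun h => hxy (Sym2.mk_isDiag_iff.1 h)
  rw [share_orient hq (Sym2.mem_mk_right x y), share_orient hq (Sym2.mem_mk_left x y),
    share_orient hq (Sym2.mem_mk_right x y), share_orient hq (Sym2.mem_mk_left x y)]
  simp only [target, if_true, Bool.false_eq_true, if_false, Option.some.injEq]
  by_cases hy : claim y = s(x, y)
  · have heven := (hc.even_of_eq y x hxy.symm (hy.trans hx.symm)).1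
    rw [hx] at heven
    rw [lightTarget_of_not_odd (Nat.not_odd_iff_even.2 heven),
      if_pos (show claim x = s(x, y) ∧ claim y = s(x, y) from ⟨hx, hy⟩)]
    simp [Nat.even_iff.1 heven]
  · rw [heavyTarget_eq_left hx hy, if_neg hxy, if_pos rfl]
    refine ⟨by omega, fun h => ?_⟩
    have heven : ¬ Odd #(classEdges ends heavy s(x, y) true) := by
      rw [Nat.odd_iff]; omega
    rw [lightTarget_of_not_odd heven,
      if_neg (show ¬(claim x = s(x, y) ∧ claim y = s(x, y)) from fun h => hy h.2),
      heavyTarget_eq_left hx hy]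
    simp [hxy]

theorem lightTarget_eq_none_of_orient_eq_none {e : E} (h : orient ends heavy claim e = none) :
    (ends e).1 ≠ (ends e).2 ∧ heavy e = false ∧
      lightTarget ends heavy claim (edgeClass ends e) = none := by
  have hl : (ends e).1 ≠ (ends e).2 := fun hl => by simp [orient_of_loop hl] at h
  refine ⟨hl, ?_⟩
  rcases orient_eq_or (heavy := heavy) (claim := claim) hl with h' | h' | h' <;>
    rw [h'] at h
  · cases h
  · cases h
  · cases hb : heavy e <;> simp_all [target]

theorem eq_of_orient_eq_none {e e' : E} (h : orient ends heavy claim e = none)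
    (h' : orient ends heavy claim e' = none) {i : V} (hi : incid ends i e)
    (hi' : incid ends i e') : e = e' := by
  obtain ⟨hl, hlight, hnone⟩ := lightTarget_eq_none_of_orient_eq_none h
  obtain ⟨-, hlight', hnone'⟩ := lightTarget_eq_none_of_orient_eq_none h'
  have hcl := ((lightTarget_eq_none hnone).2 i ((incid_iff_mem ends).1 hi)).symm.trans
    ((lightTarget_eq_none hnone').2 i ((incid_iff_mem ends).1 hi'))
  have hq : ¬ (edgeClass ends e).IsDiag := fun h => hl (Sym2.mk_isDiag_iff.1 h)
  have hcard := card_filter_orient_none (ends := ends) (heavy := heavy) (claim := claim) hq false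
  rw [target, if_neg Bool.false_ne_true, if_pos hnone] at hcard
  exact card_le_one.1 (hcard ▸ Nat.le_of_lt_succ (Nat.mod_lt _ two_pos)) e
    (mem_filter.2 ⟨mem_classEdges.2 ⟨rfl, hlight⟩, h⟩) e'
    (mem_filter.2 ⟨mem_classEdges.2 ⟨hcl.symm, hlight'⟩, h'⟩)

theorem share_orient_eq_of_orient_eq_none {e : E} (h : orient ends heavy claim e = none)
    (b : Bool) :
    share ends heavy (orient ends heavy claim) (ends e).1 s((ends e).1, (ends e).2) b =
      share ends heavy (orient ends heavy claim) (ends e).2 s((ends e).1, (ends e).2) b := by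
  obtain ⟨hl, -, hnone⟩ := lightTarget_eq_none_of_orient_eq_none h
  change lightTarget ends heavy claim s((ends e).1, (ends e).2) = none at hnone
  have hq : ¬ s((ends e).1, (ends e).2).IsDiag := fun h => hl (Sym2.mk_isDiag_iff.1 h)
  rw [share_orient hq (Sym2.mem_mk_left _ _), share_orient hq (Sym2.mem_mk_right _ _)]
  cases b
  · simp [target, hnone]
  · simp [Nat.not_odd_iff.1 (lightTarget_eq_none hnone).1]

end Claims

section Utility

variable {V E : Type*} [DecidableEq V] {ends : E → V × V} {heavy : E → Bool} {α β : ℝ}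
  {w : E → ℝ}

theorem util_eq_sum {i : V} {S : Finset E} (h : ∀ e ∈ S, incid ends i e) :
    util ends w i S = ∑ e ∈ S, w e :=
  sum_congr rfl fun e he => if_pos (h e he)

theorem util_inter_add_util_sdiff [DecidableEq E] (i : V) (S T : Finset E) :
    util ends w i (S ∩ T) + util ends w i (S \ T) = util ends w i S :=
  sum_inter_add_sum_sdiff S T _

theorem util_nonneg (hw : ∀ e, 0 ≤ w e) (i : V) (S : Finset E) : 0 ≤ util ends w i S :=
  sum_nonneg fun e _ => by split_ifs; exacts [hw e, le_rfl]

theorem le_util_of_mem (hw : ∀ e, 0 ≤ w e) {i : V} {S : Finset E} {e : E} (he : e ∈ S)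
    (hi : incid ends i e) : w e ≤ util ends w i S := by
  have := single_le_sum (f := fun e => if (ends e).1 = i ∨ (ends e).2 = i then w e else 0)
    (fun e _ => by split_ifs; exacts [hw e, le_rfl]) he
  rwa [if_pos (show (ends e).1 = i ∨ (ends e).2 = i from hi)] at this

theorem sum_weight_eq (hw : ∀ e, w e = if heavy e then α else β) (S : Finset E) :
    ∑ e ∈ S, w e =
      α * #(S.filter (heavy · = true)) + β * #(S.filter (heavy · = false)) := by
  simp_rw [hw, sum_ite, sum_const, nsmul_eq_mul, Bool.not_eq_true, mul_comm]

variable [Fintype E] [DecidableEq E]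

theorem incid_of_mem_edgesBetween {i j : V} {e : E} (he : e ∈ edgesBetween ends i j) :
    incid ends i e ∧ incid ends j e := by
  rcases (edgeClass_eq_iff ends).1 ((mem_edgesBetween ends).1 he) with h | h <;>
    simp [incid, h]

theorem sum_weight_bundleP_inter (hw : ∀ e, w e = if heavy e then α else β)
    (π : E → Option V) (v x y : V) :
    ∑ e ∈ bundleP π v ∩ edgesBetween ends x y, w e =
      α * share ends heavy π v s(x, y) true + β * share ends heavy π v s(x, y) false := by
  rw [sum_weight_eq hw]
  unfold share
  congr 4 <;> ext e <;>
    simp [bundleP, mem_edgesBetween, mem_classEdges, and_comm, and_left_comm]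

theorem util_bundleP_eq_inter {π : E → Option V}
    (hπ : ∀ e v, π e = some v → v = (ends e).1 ∨ v = (ends e).2) {i j : V} (hij : i ≠ j) :
    util ends w i (bundleP π j) = util ends w i (bundleP π j ∩ edgesBetween ends i j) := by
  refine (sum_subset inter_subset_left fun e he hne => if_neg fun hi => hne ?_).symm
  refine mem_inter.2 ⟨he, (mem_edgesBetween ends).2 ((edgeClass_eq_iff ends).2 ?_)⟩
  have hj := hπ e j (mem_filter.1 he).2
  rcases hi with hi | hi <;> rcases hj with hj | hj
  · exact absurd (hi.symm.trans hj.symm) hij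
  · exact Or.inl (Prod.ext hi hj.symm)
  · exact Or.inr (Prod.ext hj.symm hi)
  · exact absurd (hi.symm.trans hj.symm) hij

end Utility

section EnvyFree

variable {V E : Type*} [Fintype E] [DecidableEq V] [DecidableEq E]
  {ends : E → V × V} {heavy : E → Bool} {claim : V → Sym2 V} {α β : ℝ} {w : E → ℝ}

theorem share_orient_le_add_util_sdiff (hc : IsClaim ends heavy claim)
    (hw : ∀ e, w e = if heavy e then α else β) (hβ : 0 ≤ β) (hαβ : β < α) {i j : V}
    (hij : i ≠ j) :
    α * share ends heavy (orient ends heavy claim) j s(i, j) true +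
        β * share ends heavy (orient ends heavy claim) j s(i, j) false ≤
      α * share ends heavy (orient ends heavy claim) i s(i, j) true +
        β * share ends heavy (orient ends heavy claim) i s(i, j) false +
        util ends w i (bundleP (orient ends heavy claim) i \ edgesBetween ends i j) := by
  set π := orient ends heavy claim
  have hw0 : ∀ e, 0 ≤ w e := fun e => by rw [hw]; split_ifs <;> linarith
  have hT := share_orient_le_succ (ends := ends) (heavy := heavy) (claim := claim) hij true
  have hF := share_orient_le_succ (ends := ends) (heavy := heavy) (claim := claim) hij false
  have hout := util_nonneg hw0 (ends := ends) i (bundleP π i \ edgesBetween ends i j)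
  set a := share ends heavy π i s(i, j) true
  set a' := share ends heavy π j s(i, j) true
  set b := share ends heavy π i s(i, j) false
  set b' := share ends heavy π j s(i, j) false
  by_cases hx : claim i = s(i, j)
  · obtain ⟨h1, h2⟩ := share_orient_le_of_claim hc hij hx
    rcases h1.lt_or_eq with hlt | heq
    · have : (a' : ℝ) + 1 ≤ a := by exact_mod_cast hlt
      have : (b' : ℝ) ≤ b + 1 := by exact_mod_cast hF
      nlinarith
    · have : (b' : ℝ) ≤ b := by exact_mod_cast h2 heq
      have : (a' : ℝ) = a := by exact_mod_cast heq
      nlinarith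
  · obtain ⟨e₀, he₀, hcl, hheavy⟩ := exists_orient_eq_of_isClaim hc i
    have hin : e₀ ∈ bundleP π i \ edgesBetween ends i j :=
      mem_sdiff.2 ⟨mem_filter.2 ⟨mem_univ _, he₀⟩,
        fun h => hx (hcl.symm.trans ((mem_edgesBetween ends).1 h))⟩
    have hle := le_util_of_mem hw0 hin ((incid_iff_mem ends).2 (hcl ▸ hc.mem i))
    by_cases hlt : a < a'
    · obtain ⟨hb, hadj⟩ := share_orient_light_le_of_heavy_lt hij hlt
      have hα : w e₀ = α := by rw [hw, hheavy ⟨j, hadj⟩, if_pos rfl]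
      have : (a' : ℝ) ≤ a + 1 := by exact_mod_cast hT
      have : (b' : ℝ) ≤ b := by exact_mod_cast hb
      nlinarith
    · have hβle : β ≤ w e₀ := by rw [hw]; split_ifs <;> linarith
      have : (a' : ℝ) ≤ a := by exact_mod_cast not_lt.1 hlt
      have : (b' : ℝ) ≤ b + 1 := by exact_mod_cast hF
      nlinarith

theorem util_bundleP_orient_le (hc : IsClaim ends heavy claim)
    (hw : ∀ e, w e = if heavy e then α else β) (hβ : 0 ≤ β) (hαβ : β < α) (i j : V) :
    util ends w i (bundleP (orient ends heavy claim) j) ≤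
      util ends w i (bundleP (orient ends heavy claim) i) := by
  rcases eq_or_ne i j with rfl | hij
  · exact le_rfl
  rw [util_bundleP_eq_inter (fun _ _ => orient_mem_ends) hij,
    ← util_inter_add_util_sdiff i (bundleP (orient ends heavy claim) i) (edgesBetween ends i j),
    util_eq_sum fun e he => (incid_of_mem_edgesBetween (mem_inter.1 he).2).1,
    util_eq_sum fun e he => (incid_of_mem_edgesBetween (mem_inter.1 he).2).1,
    sum_weight_bundleP_inter hw, sum_weight_bundleP_inter hw]
  exact share_orient_le_add_util_sdiff hc hw hβ hαβ hij

theorem util_bundleP_inter_eq_of_orient_eq_none (hw : ∀ e, w e = if heavy e then α else β)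
    {e : E} (h : orient ends heavy claim e = none) {i : V}
    (hi : i = (ends e).1 ∨ i = (ends e).2) :
    util ends w i (bundleP (orient ends heavy claim) (ends e).1 ∩
        edgesBetween ends (ends e).1 (ends e).2) =
      util ends w i (bundleP (orient ends heavy claim) (ends e).2 ∩
        edgesBetween ends (ends e).1 (ends e).2) := by
  have hinc : ∀ f ∈ edgesBetween ends (ends e).1 (ends e).2, incid ends i f := fun f hf =>
    hi.elim (· ▸ (incid_of_mem_edgesBetween hf).1) (· ▸ (incid_of_mem_edgesBetween hf).2)
  rw [util_eq_sum fun f hf => hinc f (mem_inter.1 hf).2,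
    util_eq_sum fun f hf => hinc f (mem_inter.1 hf).2,
    sum_weight_bundleP_inter hw, sum_weight_bundleP_inter hw,
    share_orient_eq_of_orient_eq_none h true, share_orient_eq_of_orient_eq_none h false]

end EnvyFree

section DeleteOwnEdges

variable {V : Type*} (G : SimpleGraph V) (κ : V → Sym2 V)

def deleteOwnEdges : SimpleGraph V := G.deleteEdges {e | ∃ x ∈ e, e = κ x}

variable {G κ}

theorem deleteOwnEdges_adj (hκ : ∀ a b, G.Adj a b → κ a = κ b) {a b : V} :
    (deleteOwnEdges G κ).Adj a b ↔ G.Adj a b ∧ s(a, b) ≠ κ a := by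
  simp only [deleteOwnEdges, SimpleGraph.deleteEdges_adj, Set.mem_ofPred_eq, Sym2.mem_iff,
    exists_eq_or_imp, exists_eq_left, not_or]
  exact ⟨fun h => ⟨h.1, h.2.1⟩, fun h => ⟨h.1, h.2, hκ a b h.1 ▸ h.2⟩⟩

theorem reachable_deleteOwnEdges_of_walk (hκ : ∀ a b, G.Adj a b → κ a = κ b) {u w : V}
    (p : G.Walk u w) (hp : κ u ∉ p.edges) : (deleteOwnEdges G κ).Reachable u w := by
  induction p with
  | nil => rfl
  | @cons u y w h q ih =>
    rw [SimpleGraph.Walk.edges_cons, List.mem_cons, not_or] at hp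
    refine SimpleGraph.Adj.reachable ((deleteOwnEdges_adj hκ).2 ⟨h, Ne.symm hp.1⟩) |>.trans ?_
    exact ih (hκ u y h ▸ hp.2)

/-- Cut the walk at its first vertex in `κ u`. -/
theorem exists_reachable_deleteOwnEdges (hκ : ∀ a b, G.Adj a b → κ a = κ b) {u w : V}
    (p : G.Walk u w) (hw : w ∈ κ u) : ∃ z ∈ κ u, (deleteOwnEdges G κ).Reachable u z := by
  induction p with
  | nil => exact ⟨_, hw, .rfl⟩
  | @cons u y w h q ih =>
    rw [hκ u y h] at hw ⊢
    obtain ⟨z, hz, hyz⟩ := ih hw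
    by_cases hq : s(u, y) = κ y
    · exact ⟨u, hq ▸ Sym2.mem_mk_left u y, .rfl⟩
    · exact ⟨z, hz, SimpleGraph.Adj.reachable
        ((deleteOwnEdges_adj hκ).2 ⟨h, hκ u y h ▸ hq⟩) |>.trans hyz⟩

end DeleteOwnEdges

section RootClass

variable {V E : Type*} [Fintype E] [DecidableEq V] {ends : E → V × V} {heavy : E → Bool}

variable (ends heavy) in
/-- A heavy class `κ` at the vertex `r` of the heavy component `c` that `r` can claim: either
its number of heavy edges is even, so that both endvertices may claim it, or both endvertices
reach `r` without it, so that no other vertex needs it. -/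
structure IsRootClass (c : (heavyGraph ends heavy).ConnectedComponent) (r : V) (κ : Sym2 V) :
    Prop where
  heavyComponent_eq : heavyComponent ends heavy r = c
  mem : r ∈ κ
  nonempty : (classEdges ends heavy κ true).Nonempty
  even_or_walk : Even #(classEdges ends heavy κ true) ∨
    ∀ z ∈ κ, ∃ p : (heavyGraph ends heavy).Walk z r, κ ∉ p.edges

theorem exists_isRootClass [DecidableEq E] {v : V} (hv : HasHeavyNeighbor ends heavy v)
    (hno : ¬ oddMultitreeAt ends heavy v) :
    ∃ r κ, IsRootClass ends heavy (heavyComponent ends heavy v) r κ := by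
  have mk_eq : ∀ {u}, reach ends heavy v u →
      heavyComponent ends heavy u = heavyComponent ends heavy v :=
    fun h => SimpleGraph.ConnectedComponent.eq.2 ((reach_iff_reachable ends).1 h).symm
  obtain ⟨u, hvu⟩ := hv
  simp only [oddMultitreeAt, not_and_or, not_forall, not_not, exists_prop] at hno
  rcases hno with h | ⟨e, u, he, hloop, hu⟩ | ⟨u, hu, p, hp⟩ | ⟨a, b, ha, hab, hodd⟩
  · exact absurd ⟨u, hvu.ne.symm, (reach_iff_reachable ends).2 hvu.reachable⟩ h
  · refine ⟨u, s(u, u), mk_eq hu, Sym2.mem_mk_left u u, ⟨e, ?_⟩, Or.inr fun z hz => ?_⟩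
    · exact mem_classEdges.2 ⟨by simp [edgeClass, hloop], he⟩
    · rw [Sym2.mem_iff, or_self] at hz
      subst hz
      exact ⟨.nil, by simp⟩
  · cases p with
    | nil => exact absurd hp SimpleGraph.Walk.not_isCycle_nil
    | @cons _ x _ h q =>
      have hq : s(u, x) ∉ q.edges := by
        have := hp.edges_nodup
        rw [SimpleGraph.Walk.edges_cons, List.nodup_cons] at this
        exact this.1
      refine ⟨u, s(u, x), mk_eq hu, Sym2.mem_mk_left u x, classEdges_nonempty_of_adj h, ?_⟩
      refine (em _).imp id fun _ z hz => ?_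
      rcases Sym2.mem_iff.1 hz with rfl | rfl
      exacts [⟨.nil, by simp⟩, ⟨q, hq⟩]
  · refine ⟨a, s(a, b), ⟨mk_eq ha, Sym2.mem_mk_left a b, classEdges_nonempty_of_adj hab,
      Or.inl ?_⟩⟩
    rwa [filter_edgesBetween_eq_classEdges, Nat.not_odd_iff_even] at hodd

variable (ends heavy) in
def IsRootFamily (r : (heavyGraph ends heavy).ConnectedComponent → V)
    (κ : (heavyGraph ends heavy).ConnectedComponent → Sym2 V) : Prop :=
  ∀ v, HasHeavyNeighbor ends heavy v → IsRootClass ends heavy (heavyComponent ends heavy v)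
    (r (heavyComponent ends heavy v)) (κ (heavyComponent ends heavy v))

theorem exists_isRootFamily [DecidableEq E] (hno : ∀ v, ¬ oddMultitreeAt ends heavy v) :
    ∃ (r : (heavyGraph ends heavy).ConnectedComponent → V)
      (κ : (heavyGraph ends heavy).ConnectedComponent → Sym2 V),
      IsRootFamily ends heavy r κ := by
  have : ∀ c : (heavyGraph ends heavy).ConnectedComponent, ∃ r κ,
      (∃ v, heavyComponent ends heavy v = c ∧ HasHeavyNeighbor ends heavy v) →
        IsRootClass ends heavy c r κ := by
    intro c
    by_cases h : ∃ v, heavyComponent ends heavy v = c ∧ HasHeavyNeighbor ends heavy v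
    · obtain ⟨v, rfl, hv⟩ := h
      obtain ⟨r, κ, hrκ⟩ := exists_isRootClass hv (hno v)
      exact ⟨r, κ, fun _ => hrκ⟩
    · obtain ⟨v, -⟩ := c.exists_rep
      exact ⟨v, s(v, v), fun h' => absurd h' h⟩
  choose r κ hrκ using this
  exact ⟨r, κ, fun v hv => hrκ _ ⟨v, rfl, hv⟩⟩

variable {r : (heavyGraph ends heavy).ConnectedComponent → V}
  {κ : (heavyGraph ends heavy).ConnectedComponent → Sym2 V}

variable (ends heavy r κ) in
/-- The vertices claiming the root class of their component. -/
def IsSeed (a : V) : Prop :=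
  a = r (heavyComponent ends heavy a) ∨ a ∈ κ (heavyComponent ends heavy a) ∧
    Even #(classEdges ends heavy (κ (heavyComponent ends heavy a)) true)

theorem IsSeed.mem (hrκ : IsRootFamily ends heavy r κ)
    {a : V} (ha : HasHeavyNeighbor ends heavy a) (h : IsSeed ends heavy r κ a) :
    a ∈ κ (heavyComponent ends heavy a) :=
  h.elim (fun h => by have := (hrκ a ha).mem; rwa [← h] at this) And.left

theorem IsSeed.even_of_eq (hrκ : IsRootFamily ends heavy r κ)
    {u v : V} (hu : HasHeavyNeighbor ends heavy u) (hv : HasHeavyNeighbor ends heavy v)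
    (huv : u ≠ v)
    (hsu : IsSeed ends heavy r κ u) (hsv : IsSeed ends heavy r κ v)
    (h : κ (heavyComponent ends heavy u) = κ (heavyComponent ends heavy v)) :
    Even #(classEdges ends heavy (κ (heavyComponent ends heavy v)) true) := by
  rcases hsv with hvr | ⟨-, hev⟩
  · rcases hsu with hur | ⟨-, hev⟩
    · have hκ : κ (heavyComponent ends heavy v) = s(u, v) := (Sym2.mem_and_mem_iff huv).1
        ⟨h ▸ IsSeed.mem hrκ hu (Or.inl hur), IsSeed.mem hrκ hv (Or.inl hvr)⟩
      have hadj := heavyGraph_adj_of_classEdges_nonempty huv (hκ ▸ (hrκ v hv).nonempty)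
      exact absurd (hur.trans ((heavyComponent_eq_of_adj ends hadj).symm ▸ hvr.symm)) huv
    · exact h ▸ hev
  · exact hev

theorem exists_seed_reachable (hrκ : IsRootFamily ends heavy r κ)
    {v : V} (hv : HasHeavyNeighbor ends heavy v) :
    ∃ a, IsSeed ends heavy r κ a ∧ (deleteOwnEdges (heavyGraph ends heavy)
      (κ ∘ heavyComponent ends heavy)).Reachable v a := by
  set H := deleteOwnEdges (heavyGraph ends heavy) (κ ∘ heavyComponent ends heavy)
  have hκ : ∀ a b, (heavyGraph ends heavy).Adj a b →
      (κ ∘ heavyComponent ends heavy) a = (κ ∘ heavyComponent ends heavy) b := fun a b h => by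
    simp only [Function.comp, heavyComponent_eq_of_adj ends h]
  have component_eq : ∀ {a}, H.Reachable v a →
      heavyComponent ends heavy a = heavyComponent ends heavy v := fun h =>
    SimpleGraph.ConnectedComponent.eq.2 (h.mono (SimpleGraph.deleteEdges_le _)).symm
  have spec := hrκ v hv
  obtain ⟨p⟩ := (SimpleGraph.ConnectedComponent.eq.1 spec.heavyComponent_eq).symm
  obtain ⟨z, hz, hvz⟩ := exists_reachable_deleteOwnEdges hκ p spec.mem
  rcases spec.even_or_walk with heven | hwalk
  · exact ⟨z, Or.inr (by rw [component_eq hvz]; exact ⟨hz, heven⟩), hvz⟩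
  · obtain ⟨q, hq⟩ := hwalk z hz
    refine ⟨_, Or.inl (by rw [spec.heavyComponent_eq]), hvz.trans
      (reachable_deleteOwnEdges_of_walk hκ q ?_)⟩
    simpa only [Function.comp, component_eq hvz] using hq

end RootClass

section ExistsClaim

variable {V E : Type*} [Fintype E] [DecidableEq V] [DecidableEq E]
  {ends : E → V × V} {heavy : E → Bool}

theorem exists_heavy_claim (hno : ∀ v, ¬ oddMultitreeAt ends heavy v) :
    ∃ claim : V → Sym2 V, ∀ v, HasHeavyNeighbor ends heavy v →
      v ∈ claim v ∧ (classEdges ends heavy (claim v) true).Nonempty ∧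
      ∀ u, HasHeavyNeighbor ends heavy u → u ≠ v → claim u = claim v →
        Even #(classEdges ends heavy (claim v) true) := by
  classical
  obtain ⟨r, κ, hrκ⟩ := exists_isRootFamily hno
  set H := deleteOwnEdges (heavyGraph ends heavy) (κ ∘ heavyComponent ends heavy)
  set S : Set V := {a | IsSeed ends heavy r κ a}
  obtain ⟨par, hpar, hinj⟩ := H.exists_parent_injOn S
  have hD : ∀ v, HasHeavyNeighbor ends heavy v → v ∉ S →
      v ∈ {v | (∃ a ∈ S, H.Reachable v a) ∧ v ∉ S} := fun v hv hvS =>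
    ⟨exists_seed_reachable hrκ hv, hvS⟩
  have hparAdj : ∀ v, HasHeavyNeighbor ends heavy v → v ∉ S →
      (heavyGraph ends heavy).Adj v (par v) ∧ s(v, par v) ≠ κ (heavyComponent ends heavy v) :=
    fun v hv hvS => (deleteOwnEdges_adj (fun a b h => by
      simp only [Function.comp, heavyComponent_eq_of_adj ends h])).1 (hpar v (hD v hv hvS))
  have seed_ne : ∀ u v, HasHeavyNeighbor ends heavy u →
      HasHeavyNeighbor ends heavy v → u ∈ S → v ∉ S →
      κ (heavyComponent ends heavy u) ≠ s(v, par v) := fun u v hu hv huS hvS hcl => by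
    obtain ⟨hadj, hne⟩ := hparAdj v hv hvS
    rcases Sym2.mem_iff.1 (hcl ▸ IsSeed.mem hrκ hu huS) with rfl | rfl
    · exact hvS huS
    · exact hne (by rw [heavyComponent_eq_of_adj ends hadj, hcl])
  refine ⟨fun v => if v ∈ S then κ (heavyComponent ends heavy v) else s(v, par v),
    fun v hv => ?_⟩
  dsimp only
  refine ⟨?_, ?_, fun u hu huv hcl => ?_⟩
  · split_ifs with hvS
    exacts [IsSeed.mem hrκ hv hvS, Sym2.mem_mk_left v _]
  · split_ifs with hvS
    exacts [(hrκ v hv).nonempty, classEdges_nonempty_of_adj (hparAdj v hv hvS).1]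
  by_cases huS : u ∈ S <;> by_cases hvS : v ∈ S <;>
    simp only [huS, hvS, if_true, if_false] at hcl ⊢
  · exact IsSeed.even_of_eq hrκ hu hv huv huS hvS hcl
  · exact absurd hcl (seed_ne u v hu hv huS hvS)
  · exact absurd hcl.symm (seed_ne v u hv hu hvS huS)
  · exact absurd (hinj (hD u hu huS) (hD v hv hvS) hcl) huv

theorem exists_isClaim (hconn : ∀ a b : V, reach ends (fun _ => true) a b)
    (hnontriv : ∃ a b : V, a ≠ b ∧ reach ends heavy a b)
    (hno : ∀ v, ¬ oddMultitreeAt ends heavy v) : ∃ claim, IsClaim ends heavy claim := by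
  classical
  obtain ⟨claimH, hH⟩ := exists_heavy_claim hno
  set B : Set V := {v | HasHeavyNeighbor ends heavy v}
  set G := heavyGraph ends (fun _ => true)
  have hB : ∃ a, a ∈ B := by
    obtain ⟨a, b, hab, hr⟩ := hnontriv
    obtain ⟨p⟩ := (reach_iff_reachable ends).1 hr
    cases p with
    | nil => exact absurd rfl hab
    | cons h _ => exact ⟨a, _, h⟩
  obtain ⟨a, ha⟩ := hB
  obtain ⟨par, hpar, hinj⟩ := G.exists_parent_injOn B
  have hD : ∀ v ∉ B, v ∈ {v | (∃ a ∈ B, G.Reachable v a) ∧ v ∉ B} := fun v hv =>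
    ⟨⟨a, ha, (reach_iff_reachable ends).1 (hconn v a)⟩, hv⟩
  have light : ∀ v ∉ B, ¬ (classEdges ends heavy s(v, par v) true).Nonempty := fun v hv hn =>
    hv ⟨par v, heavyGraph_adj_of_classEdges_nonempty (hpar v (hD v hv)).ne hn⟩
  refine ⟨fun v => if v ∈ B then claimH v else s(v, par v), ⟨fun v => ?_, fun v => ?_,
    fun v hv => ?_, fun u v huv hcl => ?_⟩⟩
  · split_ifs with hv
    exacts [(hH v hv).1, Sym2.mem_mk_left v _]
  · split_ifs with hv
    · obtain ⟨e, he⟩ := (hH v hv).2.1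
      exact ⟨e, (mem_classEdges.1 he).1⟩
    · obtain ⟨-, e, -, he⟩ := (heavyGraph_adj ends).1 (hpar v (hD v hv))
      exact ⟨e, he⟩
  · rw [if_pos (show v ∈ B from hv)]
    exact (hH v hv).2.1
  · by_cases hu : u ∈ B <;> by_cases hv : v ∈ B <;>
      simp only [hu, hv, if_true, if_false] at hcl ⊢
    · exact ⟨(hH v hv).2.2 u hu huv hcl, (hH v hv).2.1⟩
    · exact absurd (hcl ▸ (hH u hu).2.1) (light v hv)
    · exact absurd (hcl ▸ (hH v hv).2.1) (light u hu)
    · exact absurd (hinj (hD u hu) (hD v hv) hcl) huv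

end ExistsClaim

end BiValued

/-- let `G` be a connected bi-valued symmetric multigraph with at
least one non-trivial heavy component and no heavy component whose heavy edges
induce a non-trivial odd multitree. Then there is a partial envy-free
orientation of `G` orienting all heavy edges, whose unoriented edges form a
matching, and which is privately envy-free between the endvertices of every
unoriented edge. -/
theorem stmt12 {V E : Type*} [Fintype E] [DecidableEq V] [DecidableEq E]
    (ends : E → V × V) (heavy : E → Bool) (α β : ℝ) (hβ : 0 ≤ β) (hαβ : β < α)
    (w : E → ℝ) (hw : ∀ e, w e = if heavy e then α else β)
    -- G is connected:
    (hGconn : ∀ a b : V, reach ends (fun _ => true) a b)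
    -- G contains a non-trivial heavy component:
    (hnontriv : ∃ a b : V, a ≠ b ∧ reach ends heavy a b)
    -- no heavy component of G induces a non-trivial odd multitree:
    (hnotree : ∀ v : V, ¬ oddMultitreeAt ends heavy v) :
    ∃ πG : E → Option V,
      -- πG is a partial orientation:
      (∀ e v, πG e = some v → v = (ends e).1 ∨ v = (ends e).2) ∧
      -- πG is envy-free:
      (∀ i j : V, util ends w i (bundleP πG j) ≤ util ends w i (bundleP πG i)) ∧
      -- all heavy edges are oriented:
      (∀ e, heavy e = true → πG e ≠ none) ∧
      -- the unoriented edges form a matching: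
      (∀ e, πG e = none → (ends e).1 ≠ (ends e).2) ∧
      (∀ e e', πG e = none → πG e' = none → e ≠ e' →
        ∀ i : V, incid ends i e → ¬ incid ends i e') ∧
      -- πG is PEF between the endvertices of every unoriented edge:
      (∀ e, πG e = none →
        (util ends w (ends e).1 (bundleP πG (ends e).1 ∩ edgesBetween ends (ends e).1 (ends e).2)
          = util ends w (ends e).1 (bundleP πG (ends e).2 ∩ edgesBetween ends (ends e).1 (ends e).2)) ∧
        (util ends w (ends e).2 (bundleP πG (ends e).1 ∩ edgesBetween ends (ends e).1 (ends e).2)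
          = util ends w (ends e).2 (bundleP πG (ends e).2 ∩ edgesBetween ends (ends e).1 (ends e).2))) := by
  obtain ⟨claim, hc⟩ := BiValued.exists_isClaim hGconn hnontriv hnotree
  exact ⟨BiValued.orient ends heavy claim,
    fun _ _ => BiValued.orient_mem_ends,
    BiValued.util_bundleP_orient_le hc hw hβ hαβ,
    fun _ => BiValued.orient_ne_none_of_heavy,
    fun _ he => (BiValued.lightTarget_eq_none_of_orient_eq_none he).1,
    fun _ _ he he' hne _ hi hi' => hne (BiValued.eq_of_orient_eq_none he he' hi hi'),
    fun _ he => ⟨BiValued.util_bundleP_inter_eq_of_orient_eq_none hw he (Or.inl rfl),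
      BiValued.util_bundleP_inter_eq_of_orient_eq_none hw he (Or.inr rfl)⟩⟩
end

section
/- Let K be a multigraph that is connected via heavy edges, has at least two vertices, and whose heavy edges contain a spanning tree T. If T is rooted at a vertex v and every tree edge is oriented away from the root, and additionally one extra heavy edge (a heavy self-loop at v, or a heavy non-tree edge oriented toward v) is oriented toward v, then every vertex of K receives exactly one heavy edge under this partial orientation, and the partial orientation is envy-free with respect to the oriented edges. -/
/-- The simple graph whose adjacency is given by a set `T` of edges. -/
def edgeSetGraph {V E : Type*} (ends : E → V × V) (T : Finset E) : SimpleGraph V where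
  Adj a b := a ≠ b ∧ ∃ e ∈ T, ends e = (a, b) ∨ ends e = (b, a)
  symm := by
    constructor
    rintro a b ⟨hab, e, he, h⟩
    exact ⟨hab.symm, e, he, h.symm⟩
  loopless := by constructor; rintro a ⟨ha, -⟩; exact ha rfl
theorem Finset.card_filter_eq_one_of_surjOn {α β : Type*} [DecidableEq β] {s : Finset α}
    {t : Finset β} {f : α → β} (hf : Set.MapsTo f s t) (hsurj : Set.SurjOn f s t)
    (hst : s.card ≤ t.card) {b : β} (hb : b ∈ t) : (s.filter (f · = b)).card = 1 := by
  obtain ⟨a, ha, rfl⟩ := hsurj hb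
  have hinj := Finset.injOn_of_surjOn_of_card_le f hf hsurj hst
  refine Finset.card_eq_one.mpr ⟨a, Finset.eq_singleton_iff_unique_mem.mpr ⟨?_, ?_⟩⟩
  · exact Finset.mem_filter.mpr ⟨ha, rfl⟩
  · intro a' ha'
    rw [Finset.mem_filter] at ha'
    exact hinj ha'.1 ha ha'.2

theorem SimpleGraph.Connected.exists_adj_dist_eq_add_one {V : Type*} {G : SimpleGraph V}
    (hG : G.Connected) {u v : V} (huv : u ≠ v) :
    ∃ x, G.Adj x u ∧ G.dist v u = G.dist v x + 1 := by
  obtain ⟨p, hp⟩ := hG.exists_walk_length_eq_dist u v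
  cases p with
  | nil => exact absurd rfl huv
  | @cons _ x _ hux q =>
    have hqx : G.dist v x ≤ q.length := by
      simpa [SimpleGraph.dist_comm] using G.dist_le q
    have hpos : 0 < G.dist u v := hG.pos_dist_of_ne huv
    rw [SimpleGraph.Walk.length_cons] at hp
    rw [SimpleGraph.dist_comm] at hp hpos
    refine ⟨x, hux.symm, ?_⟩
    rcases hux.symm.diff_dist_adj (u := v) with h | h | h <;> omega

section TreeOrientation

variable {V E : Type*} {ends : E → V × V} {T : Finset E} {v : V}
  {π : E → Option V}

theorem edgeSetGraph_adj_of_mem {e : E} (he : e ∈ T) (hne : (ends e).1 ≠ (ends e).2) :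
    (edgeSetGraph ends T).Adj (ends e).1 (ends e).2 :=
  ⟨hne, e, he, Or.inl rfl⟩

theorem card_add_one_of_isTree [Fintype V] (hT : (edgeSetGraph ends T).IsTree)
    (hsimple : ∀ e ∈ T, ∀ e' ∈ T, samePair ends e e' → e = e')
    (hnoloop : ∀ e ∈ T, (ends e).1 ≠ (ends e).2) : T.card + 1 = Fintype.card V := by
  classical
  rw [← hT.card_edgeFinset]
  congr 1
  refine Finset.card_bij (fun e _ => s((ends e).1, (ends e).2)) ?_ ?_ ?_
  · intro e he
    simpa using edgeSetGraph_adj_of_mem he (hnoloop e he)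
  · intro e he e' he' hmk
    exact hsimple e he e' he' (Sym2.mk_eq_mk_iff.mp hmk)
  · intro b hb
    induction b with
    | _ a c =>
      obtain ⟨-, e, he, hends⟩ := (SimpleGraph.mem_edgeFinset.mp hb)
      refine ⟨e, he, ?_⟩
      rcases hends with h | h <;> simp [h, Sym2.eq_swap]

def OrientedAwayFrom (G : SimpleGraph V) (v : V) (ends : E → V × V) (π : E → Option V)
    (e : E) : Prop :=
  (π e = some (ends e).2 ∧ G.dist v (ends e).2 = G.dist v (ends e).1 + 1) ∨
  (π e = some (ends e).1 ∧ G.dist v (ends e).1 = G.dist v (ends e).2 + 1)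

namespace OrientedAwayFrom

variable {G : SimpleGraph V} {e : E}

theorem fst_ne_snd (h : OrientedAwayFrom G v ends π e) : (ends e).1 ≠ (ends e).2 := by
  intro heq
  rcases h with ⟨-, hd⟩ | ⟨-, hd⟩ <;> rw [heq] at hd <;> omega

theorem exists_eq_some (h : OrientedAwayFrom G v ends π e) :
    ∃ t, π e = some t ∧ t ≠ v ∧ ((ends e).1 = t ∨ (ends e).2 = t) := by
  rcases h with ⟨hπ, hd⟩ | ⟨hπ, hd⟩
  · refine ⟨_, hπ, ?_, Or.inr rfl⟩
    rintro rfl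
    rw [SimpleGraph.dist_self] at hd
    omega
  · refine ⟨_, hπ, ?_, Or.inl rfl⟩
    rintro rfl
    rw [SimpleGraph.dist_self] at hd
    omega

theorem ne_some (h : OrientedAwayFrom G v ends π e) : π e ≠ some v := by
  obtain ⟨t, hπ, htv, -⟩ := h.exists_eq_some
  rw [hπ]
  exact fun h => htv (Option.some_injective _ h)

theorem eq_some_of_dist {x u : V} (h : OrientedAwayFrom G v ends π e)
    (hends : ends e = (x, u) ∨ ends e = (u, x)) (hd : G.dist v u = G.dist v x + 1) :
    π e = some u := by
  rcases h with ⟨hπ, hd'⟩ | ⟨hπ, hd'⟩ <;> rcases hends with h | h <;>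
    simp only [h] at hπ hd' <;> first | exact hπ | omega

end OrientedAwayFrom

theorem exists_mem_eq_some_of_ne (hT : (edgeSetGraph ends T).Connected)
    (hπ : ∀ e ∈ T, OrientedAwayFrom (edgeSetGraph ends T) v ends π e) {u : V} (hu : u ≠ v) :
    ∃ e ∈ T, π e = some u := by
  obtain ⟨x, ⟨-, e, he, hends⟩, hd⟩ := hT.exists_adj_dist_eq_add_one hu
  exact ⟨e, he, (hπ e he).eq_some_of_dist hends hd⟩

theorem card_filter_eq_some_eq_one [Fintype V] [DecidableEq V]
    (hT : (edgeSetGraph ends T).IsTree)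
    (hsimple : ∀ e ∈ T, ∀ e' ∈ T, samePair ends e e' → e = e')
    (hπ : ∀ e ∈ T, OrientedAwayFrom (edgeSetGraph ends T) v ends π e) {u : V} (hu : u ≠ v) :
    (T.filter (π · = some u)).card = 1 := by
  have hcard := card_add_one_of_isTree hT hsimple fun e he => (hπ e he).fst_ne_snd
  refine Finset.card_filter_eq_one_of_surjOn (t := (Finset.univ.erase v).map .some)
    ?_ ?_ ?_ (by simpa using hu)
  · intro e he
    obtain ⟨t, hπe, htv, -⟩ := (hπ e he).exists_eq_some
    simpa [hπe] using htv
  · intro o ho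
    obtain ⟨u', hu', rfl⟩ := Finset.mem_map.mp ho
    obtain ⟨e, he, hπe⟩ := exists_mem_eq_some_of_ne hT.connected hπ (Finset.ne_of_mem_erase hu')
    exact ⟨e, he, hπe⟩
  · rw [Finset.card_map, Finset.card_erase_of_mem (Finset.mem_univ v), Finset.card_univ]
    omega

theorem eq_some_cases {G : SimpleGraph V} {e₀ : E} (hπ : ∀ e ∈ T, OrientedAwayFrom G v ends π e)
    (he₀π : π e₀ = some v) (hother : ∀ e, e ∉ T → e ≠ e₀ → π e = none) {e : E} {u : V}
    (h : π e = some u) : (e ∈ T ∧ u ≠ v) ∨ (e = e₀ ∧ u = v) := by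
  by_cases he : e ∈ T
  · refine Or.inl ⟨he, ?_⟩
    rintro rfl
    exact (hπ e he).ne_some h
  · by_cases he₀ : e = e₀
    · subst he₀
      exact Or.inr ⟨rfl, Option.some_injective _ (h.symm.trans he₀π)⟩
    · simp [hother e he he₀] at h

theorem incident_of_eq_some {G : SimpleGraph V} {e₀ : E}
    (hπ : ∀ e ∈ T, OrientedAwayFrom G v ends π e) (he₀v : (ends e₀).1 = v ∨ (ends e₀).2 = v)
    (he₀π : π e₀ = some v) (hother : ∀ e, e ∉ T → e ≠ e₀ → π e = none) {e : E} {u : V}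
    (h : π e = some u) : (ends e).1 = u ∨ (ends e).2 = u := by
  rcases eq_some_cases hπ he₀π hother h with ⟨he, -⟩ | ⟨rfl, rfl⟩
  · obtain ⟨t, hπe, -, ht⟩ := (hπ e he).exists_eq_some
    rwa [Option.some_injective _ (h.symm.trans hπe)]
  · exact he₀v

variable [Fintype E] [DecidableEq V] [DecidableEq E] {e₀ : E}

theorem bundleP_root {G : SimpleGraph V} (hπ : ∀ e ∈ T, OrientedAwayFrom G v ends π e)
    (he₀π : π e₀ = some v) (hother : ∀ e, e ∉ T → e ≠ e₀ → π e = none) :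
    bundleP π v = {e₀} := by
  ext e
  simp only [bundleP, Finset.mem_filter, Finset.mem_univ, true_and, Finset.mem_singleton]
  refine ⟨fun h => ?_, fun h => h ▸ he₀π⟩
  rcases eq_some_cases hπ he₀π hother h with ⟨-, hvv⟩ | ⟨rfl, -⟩
  · exact absurd rfl hvv
  · rfl

theorem bundleP_eq_filter_of_ne {G : SimpleGraph V}
    (hπ : ∀ e ∈ T, OrientedAwayFrom G v ends π e) (he₀π : π e₀ = some v)
    (hother : ∀ e, e ∉ T → e ≠ e₀ → π e = none) {u : V} (hu : u ≠ v) :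
    bundleP π u = T.filter (π · = some u) := by
  ext e
  simp only [bundleP, Finset.mem_filter, Finset.mem_univ, true_and]
  refine ⟨fun h => ⟨?_, h⟩, And.right⟩
  rcases eq_some_cases hπ he₀π hother h with ⟨he, -⟩ | ⟨-, rfl⟩
  · exact he
  · exact absurd rfl hu

theorem exists_bundleP_eq_singleton [Fintype V] (hT : (edgeSetGraph ends T).IsTree)
    (hsimple : ∀ e ∈ T, ∀ e' ∈ T, samePair ends e e' → e = e')
    (hπ : ∀ e ∈ T, OrientedAwayFrom (edgeSetGraph ends T) v ends π e) (he₀π : π e₀ = some v)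
    (hother : ∀ e, e ∉ T → e ≠ e₀ → π e = none) (u : V) :
    ∃ f, bundleP π u = {f} ∧ π f = some u := by
  suffices (bundleP π u).card = 1 by
    obtain ⟨f, hf⟩ := Finset.card_eq_one.mp this
    have hfu : f ∈ bundleP π u := hf ▸ Finset.mem_singleton_self f
    exact ⟨f, hf, (Finset.mem_filter.mp hfu).2⟩
  by_cases hu : u = v
  · rw [hu, bundleP_root hπ he₀π hother, Finset.card_singleton]
  · rw [bundleP_eq_filter_of_ne hπ he₀π hother hu]
    exact card_filter_eq_some_eq_one hT hsimple hπ hu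

end TreeOrientation

section Utility

variable {V E : Type*} [DecidableEq V] (ends : E → V × V) (w : E → ℝ) (i : V) (f : E)

theorem util_singleton_le (hf : 0 ≤ w f) : util ends w i {f} ≤ w f := by
  rw [util, Finset.sum_singleton]
  split_ifs <;> simp [hf]

theorem util_singleton_of_incident (hf : (ends f).1 = i ∨ (ends f).2 = i) :
    util ends w i {f} = w f := by
  rw [util, Finset.sum_singleton, if_pos hf]

end Utility

theorem stmt17_general {V E : Type*} [Fintype E] [Fintype V]
    [DecidableEq V] [DecidableEq E]
    (ends : E → V × V) (heavy : E → Bool) (α : ℝ)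
    (w : E → ℝ) (hwh : ∀ e, heavy e = true → w e = α) (hwnn : ∀ e, 0 ≤ w e)
    -- T is a spanning tree of heavy edges:
    (T : Finset E) (hTheavy : ∀ e ∈ T, heavy e = true)
    (hTtree : (edgeSetGraph ends T).IsTree)
    (hTsimple : ∀ e ∈ T, ∀ e' ∈ T, samePair ends e e' → e = e')
    -- the root and the partial orientation:
    (v : V) (π : E → Option V)
    -- every tree edge is oriented away from the root:
    (htree : ∀ e ∈ T,
      (π e = some (ends e).2 ∧
        (edgeSetGraph ends T).dist v (ends e).2 = (edgeSetGraph ends T).dist v (ends e).1 + 1) ∨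
      (π e = some (ends e).1 ∧
        (edgeSetGraph ends T).dist v (ends e).1 = (edgeSetGraph ends T).dist v (ends e).2 + 1))
    -- one extra heavy edge incident with the root (a self-loop at `v` or a
    -- non-tree edge) is oriented toward the root:
    (e₀ : E) (he₀ : heavy e₀ = true)
    (he₀v : (ends e₀).1 = v ∨ (ends e₀).2 = v) (he₀π : π e₀ = some v)
    -- no other edge is oriented:
    (hother : ∀ e, e ∉ T → e ≠ e₀ → π e = none) :
    (∀ u : V,
      (Finset.univ.filter (fun e => π e = some u ∧ heavy e = true)).card = 1) ∧
    (∀ i j : V, util ends w i (bundleP π j) ≤ util ends w i (bundleP π i)) := by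
  have hπ : ∀ e ∈ T, OrientedAwayFrom (edgeSetGraph ends T) v ends π e := htree
  have hheavy : ∀ e u, π e = some u → heavy e = true := fun e u h => by
    rcases eq_some_cases hπ he₀π hother h with ⟨he, -⟩ | ⟨rfl, -⟩
    exacts [hTheavy e he, he₀]
  have hbundle := exists_bundleP_eq_singleton hTtree hTsimple hπ he₀π hother
  refine ⟨fun u => ?_, fun i j => ?_⟩
  · obtain ⟨f, hf, -⟩ := hbundle u
    rw [← Finset.card_singleton f, ← hf, bundleP]
    congr 1
    exact Finset.filter_congr fun e _ => and_iff_left_of_imp (hheavy e u)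
  · obtain ⟨fi, hfi, hπi⟩ := hbundle i
    obtain ⟨fj, hfj, hπj⟩ := hbundle j
    rw [hfi, hfj]
    calc util ends w i {fj} ≤ w fj := util_singleton_le ends w i fj (hwnn fj)
      _ = w fi := by rw [hwh fj (hheavy fj j hπj), hwh fi (hheavy fi i hπi)]
      _ = util ends w i {fi} :=
        (util_singleton_of_incident ends w i fi (incident_of_eq_some hπ he₀v he₀π hother hπi)).symm

/-- let `K` be a multigraph on at least two vertices, connected
via heavy edges, whose heavy edges contain a spanning tree `T`. If every tree
edge is oriented away from a root `v` (i.e. toward the endpoint farther from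
`v` in the tree), and one extra heavy edge (a heavy self-loop at `v` or a
heavy non-tree edge) is oriented toward `v`, then every vertex receives
exactly one heavy edge, and the partial orientation is envy-free. -/
theorem stmt17 {V E : Type*} [Fintype E] [Fintype V] [Nontrivial V]
    [DecidableEq V] [DecidableEq E]
    (ends : E → V × V) (heavy : E → Bool) (α : ℝ) (hα : 0 < α)
    (w : E → ℝ) (hwh : ∀ e, heavy e = true → w e = α) (hwnn : ∀ e, 0 ≤ w e)
    -- K is connected via heavy edges:
    (hconn : ∀ a b : V, heavyReach ends heavy a b)
    -- T is a spanning tree of heavy edges: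
    (T : Finset E) (hTheavy : ∀ e ∈ T, heavy e = true)
    (hTtree : (edgeSetGraph ends T).IsTree)
    (hTsimple : ∀ e ∈ T, ∀ e' ∈ T, samePair ends e e' → e = e')
    (hTnoloop : ∀ e ∈ T, (ends e).1 ≠ (ends e).2)
    -- the root and the partial orientation:
    (v : V) (π : E → Option V)
    -- every tree edge is oriented away from the root:
    (htree : ∀ e ∈ T,
      (π e = some (ends e).2 ∧
        (edgeSetGraph ends T).dist v (ends e).2 = (edgeSetGraph ends T).dist v (ends e).1 + 1) ∨
      (π e = some (ends e).1 ∧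
        (edgeSetGraph ends T).dist v (ends e).1 = (edgeSetGraph ends T).dist v (ends e).2 + 1))
    -- one extra heavy edge incident with the root (a self-loop at `v` or a
    -- non-tree edge) is oriented toward the root:
    (e₀ : E) (he₀ : heavy e₀ = true) (he₀T : e₀ ∉ T)
    (he₀v : (ends e₀).1 = v ∨ (ends e₀).2 = v) (he₀π : π e₀ = some v)
    -- no other edge is oriented:
    (hother : ∀ e, e ∉ T → e ≠ e₀ → π e = none) :
    (∀ u : V,
      (Finset.univ.filter (fun e => π e = some u ∧ heavy e = true)).card = 1) ∧
    (∀ i j : V, util ends w i (bundleP π j) ≤ util ends w i (bundleP π i)) :=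
  stmt17_general ends heavy α w hwh hwnn T hTheavy hTtree hTsimple v π htree e₀ he₀ he₀v he₀π hother
end
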